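/- arXiv:1109.4700 — 5 statements merged into one kernel-verified Lean document; each statement's English description precedes it below -/
import Mathlib

section
/- Let i < j be odd positive integers. In the graph with vertex set {0,1,...,j} and edges {a,b} whenever a + b = i or a + b = j (with a ≠ b), every connected component is a path, and the number of connected components equals (j − i)/2. -/
/-- The condition graph for the pair `(i, j)`: vertices are `0, 1, ..., j` and an edge
joins distinct `a, b` iff `a + b = i` or `a + b = j`. -/
def condGraph (i j : ℕ) : SimpleGraph (Fin (j + 1)) where
  Adj a b := a ≠ b ∧ (a.1 + b.1 = i ∨ a.1 + b.1 = j)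
  symm := by
    refine ⟨?_⟩
    intro a b h
    exact ⟨h.1.symm, by rw [Nat.add_comm]; exact h.2⟩
  loopless := ⟨fun a h => h.1 rfl⟩

instance (i j : ℕ) : DecidableRel (condGraph i j).Adj :=
  fun a b => inferInstanceAs (Decidable (a ≠ b ∧ (a.1 + b.1 = i ∨ a.1 + b.1 = j)))

/-! Every edge `{a, b}` has `a + b ≡ i (mod j - i)`, and conversely `n ≥ j - i` is joined to
`n - (j - i)` through `j - n`. Hence two vertices lie in one component iff their residues
`x, y` modulo `j - i` satisfy `y = x` or `y = i - x`. As `i` is odd and `j - i` is even, this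
involution of `ZMod (j - i)` has no fixed point, so the `j - i` residues fall into `(j - i) / 2`
components. -/

open SimpleGraph Finset

theorem SimpleGraph.isAcyclic_of_forall_subgraph_exists_subsingleton_neighborSet {V : Type*}
    {G : SimpleGraph V} (h : ∀ H : G.Subgraph, H.verts.Nonempty →
      ∃ v ∈ H.verts, (H.neighborSet v).Subsingleton) :
    G.IsAcyclic := by
  intro u p hp
  obtain ⟨v, hv, hsub⟩ := h p.toSubgraph ⟨u, p.start_mem_verts_toSubgraph⟩
  obtain ⟨a, b, hab, hnbr⟩ := Set.ncard_eq_two.mp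
    (hp.ncard_neighborSet_toSubgraph_eq_two (p.mem_verts_toSubgraph.mp hv))
  exact hab (hsub (by simp [hnbr]) (by simp [hnbr]))

theorem Nat.card_eq_two_mul_of_fiber_eq_pair {α β : Type*} [Finite α] {f : α → β}
    (hf : Function.Surjective f) {σ : α → α} (hσ : ∀ x, σ x ≠ x)
    (hfib : ∀ x y, f y = f x ↔ y = x ∨ y = σ x) : Nat.card α = 2 * Nat.card β := by
  classical
  have := Finite.of_surjective f hf
  cases nonempty_fintype α
  cases nonempty_fintype β
  have hcard : ∀ b ∈ (univ : Finset β), #{a | f a = b} = 2 := by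
    intro b _
    obtain ⟨x, rfl⟩ := hf b
    have : ({a | f a = f x} : Finset α) = {x, σ x} := by ext y; simp [hfib]
    rw [this, card_pair_eq_two_iff]
    exact (hσ x).symm
  rw [Nat.card_eq_fintype_card, ← Finset.card_univ,
    card_eq_sum_card_fiberwise (fun a _ => mem_univ (f a)), sum_const_nat hcard, Finset.card_univ,
    mul_comm, Nat.card_eq_fintype_card]

theorem ZMod.add_self_ne_natCast_of_odd {n k : ℕ} (hn : 2 ∣ n) (hk : Odd k) (x : ZMod n) :
    x + x ≠ k := by
  intro h
  have h₂ := congrArg (ZMod.castHom hn (ZMod 2)) h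
  rw [map_add, map_natCast, hk.natCast_zmod_two] at h₂
  generalize ZMod.castHom hn (ZMod 2) x = y at h₂
  revert y
  decide

section

variable {i j : ℕ}

theorem condGraph_adj_iff (hi : Odd i) (hj : Odd j) {a b : Fin (j + 1)} :
    (condGraph i j).Adj a b ↔ a.val + b.val = i ∨ a.val + b.val = j := by
  refine ⟨And.right, fun h => ⟨fun hab => ?_, h⟩⟩
  subst hab
  rw [Nat.odd_iff] at hi hj
  omega

theorem condGraph_degree_le_two (v : Fin (j + 1)) : (condGraph i j).degree v ≤ 2 :=
  calc (condGraph i j).degree v = #((condGraph i j).neighborFinset v) := rfl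
    _ ≤ #({i - v.val, j - v.val} : Finset ℕ) := by
      refine card_le_card_of_injOn Fin.val (fun w hw => ?_) Fin.val_injective.injOn
      rw [mem_coe, mem_neighborFinset] at hw
      rcases hw.2 with h | h <;> simp <;> omega
    _ ≤ 2 := card_le_two

/-- If the least vertex `m` of `H` has two `H`-neighbours, one of them is `w = j - m`, and any
other `H`-neighbour of `w` would be `i - w < m`. -/
theorem condGraph_exists_subsingleton_neighborSet (hij : i ≤ j) (H : (condGraph i j).Subgraph)
    (hH : H.verts.Nonempty) : ∃ v ∈ H.verts, (H.neighborSet v).Subsingleton := by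
  obtain ⟨m, hm, hmin⟩ := wellFounded_lt.has_min H.verts hH
  by_cases hsub : (H.neighborSet m).Subsingleton
  · exact ⟨m, hm, hsub⟩
  obtain ⟨a, ha, b, hb, hab⟩ := Set.not_subsingleton_iff.mp hsub
  obtain ⟨w, hw, hmw⟩ : ∃ w, H.Adj m w ∧ m.val + w.val = j := by
    rcases (H.adj_sub ha).2 with ha' | ha'
    · rcases (H.adj_sub hb).2 with hb' | hb'
      · exact absurd (Fin.ext (by omega)) hab
      · exact ⟨b, hb, hb'⟩
    · exact ⟨a, ha, ha'⟩
  have hnbr : ∀ x ∈ H.neighborSet w, x = m := by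
    intro x hx
    have hmx : m.val ≤ x.val := not_lt.mp (hmin x (H.edge_vert hx.symm))
    exact Fin.ext (by rcases (H.adj_sub hx).2 with h | h <;> omega)
  exact ⟨w, H.edge_vert hw.symm, fun x hx y hy => (hnbr x hx).trans (hnbr y hy).symm⟩

theorem condGraph_isAcyclic (hij : i ≤ j) : (condGraph i j).IsAcyclic :=
  isAcyclic_of_forall_subgraph_exists_subsingleton_neighborSet
    (condGraph_exists_subsingleton_neighborSet hij)

theorem condGraph_natCast_add_eq_of_adj (hij : i ≤ j) {a b : Fin (j + 1)}
    (h : (condGraph i j).Adj a b) :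
    (a.val + b.val : ZMod (j - i)) = i := by
  have hji : (j : ZMod (j - i)) = i := by
    have := ZMod.natCast_self (j - i)
    rwa [Nat.cast_sub hij, sub_eq_zero] at this
  rcases h.2 with h | h <;> rw [← Nat.cast_add, h]
  exact hji

theorem condGraph_natCast_eq_or_add_eq_of_reachable (hij : i ≤ j) {v w : Fin (j + 1)}
    (h : (condGraph i j).Reachable v w) :
    (v.val : ZMod (j - i)) = w.val ∨ (v.val + w.val : ZMod (j - i)) = i := by
  obtain ⟨p⟩ := h
  induction p with
  | nil => exact Or.inl rfl
  | cons hadj _ ih =>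
    have hab := condGraph_natCast_add_eq_of_adj hij hadj
    rcases ih with h | h
    · exact Or.inr (h ▸ hab)
    · exact Or.inl (by linear_combination hab - h)

theorem condGraph_reachable_sub (hi : Odd i) (hj : Odd j) (hij : i ≤ j) (v : Fin (j + 1))
    (hv : j - i ≤ v.val) :
    (condGraph i j).Reachable v ⟨v.val - (j - i), by omega⟩ := by
  have h₁ : (condGraph i j).Adj v ⟨j - v.val, by omega⟩ :=
    (condGraph_adj_iff hi hj).mpr (Or.inr (by simp; omega))
  have h₂ : (condGraph i j).Adj ⟨j - v.val, by omega⟩ ⟨v.val - (j - i), by omega⟩ :=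
    (condGraph_adj_iff hi hj).mpr (Or.inl (by simp; omega))
  exact h₁.reachable.trans h₂.reachable

theorem condGraph_reachable_mod (hi : Odd i) (hj : Odd j) (hij : i < j) (v : Fin (j + 1)) :
    (condGraph i j).Reachable v ⟨v.val % (j - i), (v.val.mod_le _).trans_lt v.isLt⟩ := by
  induction v using WellFoundedLT.induction with
  | _ v ih => ?_
  by_cases hv : v.val < j - i
  · simp only [Nat.mod_eq_of_lt hv]
    rfl
  · have hstep := condGraph_reachable_sub hi hj hij.le v (by omega)
    have hmod : (v.val - (j - i)) % (j - i) = v.val % (j - i) := by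
      rw [← Nat.mod_eq_sub_mod (by omega)]
    simpa only [hmod] using hstep.trans (ih _ (Fin.lt_def.mpr (by dsimp only; omega)))

theorem condGraph_reachable_of_natCast_eq (hi : Odd i) (hj : Odd j) (hij : i < j)
    {v w : Fin (j + 1)} (h : (v.val : ZMod (j - i)) = w.val) : (condGraph i j).Reachable v w := by
  rw [ZMod.natCast_eq_natCast_iff'] at h
  have hw := condGraph_reachable_mod hi hj hij w
  simp only [← h] at hw
  exact (condGraph_reachable_mod hi hj hij v).trans hw.symm

theorem condGraph_reachable_iff (hi : Odd i) (hj : Odd j) (hij : i < j) {v w : Fin (j + 1)} :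
    (condGraph i j).Reachable v w ↔
      (v.val : ZMod (j - i)) = w.val ∨ (v.val + w.val : ZMod (j - i)) = i := by
  refine ⟨condGraph_natCast_eq_or_add_eq_of_reachable hij.le, ?_⟩
  rintro (h | h)
  · exact condGraph_reachable_of_natCast_eq hi hj hij h
  · let u : Fin (j + 1) := ⟨j - w.val, by omega⟩
    have hu : (condGraph i j).Adj u w :=
      (condGraph_adj_iff hi hj).mpr (Or.inr (by simp [u]; omega))
    have hvu : (v.val : ZMod (j - i)) = u.val := by
      have := condGraph_natCast_add_eq_of_adj hij.le hu
      linear_combination h - this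
    exact (condGraph_reachable_of_natCast_eq hi hj hij hvu).trans hu.reachable

theorem condGraph_two_mul_card_connectedComponent (hi : Odd i) (hj : Odd j) (hij : i < j) :
    2 * Nat.card (condGraph i j).ConnectedComponent = j - i := by
  have : NeZero (j - i) := ⟨by omega⟩
  let vertex (x : ZMod (j - i)) : Fin (j + 1) := ⟨x.val, x.val_lt.trans_le (by omega)⟩
  have hvertex (x : ZMod (j - i)) : ((vertex x).val : ZMod (j - i)) = x :=
    ZMod.natCast_zmod_val x
  let f (x : ZMod (j - i)) := (condGraph i j).connectedComponentMk (vertex x)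
  have hf : Function.Surjective f := by
    refine ConnectedComponent.ind fun v => ⟨v.val, ConnectedComponent.eq.mpr ?_⟩
    exact condGraph_reachable_of_natCast_eq hi hj hij (hvertex _)
  have hfib (x y : ZMod (j - i)) : f y = f x ↔ y = x ∨ y = i - x := by
    rw [ConnectedComponent.eq, condGraph_reachable_iff hi hj hij, hvertex, hvertex,
      eq_sub_iff_add_eq]
  have hσ (x : ZMod (j - i)) : (i : ZMod (j - i)) - x ≠ x := fun h =>
    ZMod.add_self_ne_natCast_of_odd (Nat.Odd.sub_odd hj hi).two_dvd hi x
      (sub_eq_iff_eq_add.mp h).symm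
  rw [← Nat.card_zmod (j - i)]
  exact (Nat.card_eq_two_mul_of_fiber_eq_pair hf hσ hfib).symm

end

theorem condGraph_components_general (i j : ℕ) (hi : Odd i) (hj : Odd j)
    (hij : i < j) :
    (∀ v : Fin (j + 1), (condGraph i j).degree v ≤ 2) ∧
    (condGraph i j).IsAcyclic ∧
    Nat.card (condGraph i j).ConnectedComponent = (j - i) / 2 :=
  ⟨condGraph_degree_le_two, condGraph_isAcyclic hij.le, by
    rw [← condGraph_two_mul_card_connectedComponent hi hj hij,
      Nat.mul_div_cancel_left _ two_pos]⟩

/-- For odd positive `i < j`, every connected component of the condition graph is a path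
(each vertex has degree at most 2 and there are no cycles) and the number of connected
components equals `(j - i)/2`. -/
theorem condGraph_components (i j : ℕ) (hi : Odd i) (hj : Odd j) (h0 : 0 < i)
    (hij : i < j) :
    (∀ v : Fin (j + 1), (condGraph i j).degree v ≤ 2) ∧
    (condGraph i j).IsAcyclic ∧
    Nat.card (condGraph i j).ConnectedComponent = (j - i) / 2 :=
  condGraph_components_general i j hi hj hij
end

section
/- Let i < j be odd positive integers and let A be a uniformly random subset of {0,1,...,j}. Then the probability that neither i nor j belongs to A + A equals F_{q+2}^r · F_{q+4}^{r'} / 2^{j+1}, where q = 2⌈(i+1)/(j−i)⌉, r = ((j−i)⌈(i+1)/(j−i)⌉ − (i+1))/2, r' = (j+1 − (j−i)⌈(i+1)/(j−i)⌉)/2, and F_k is the k-th Fibonacci number (F₁ = F₂ = 1). Equivalently, the number of subsets A ⊆ {0,...,j} with i ∉ A+A and j ∉ A+A equals F_{q+2}^r · F_{q+4}^{r'}. -/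
/-!
Put `d = j - i` and call `x, y ∈ {0, …, j}` adjacent when `x + y ∈ {i, j}`; the sets `A`
counted are the independent sets of this graph. As `i` and `j` are odd and `d` is even, adjacent
vertices have opposite parity and `x + y ≡ j (mod d)`, so each component is labelled by an odd
residue `a < d` and consists of the `x ≡ a` together with the `x ≡ j - a (mod d)`. Listed as
`j - a, a, j - a - d, a + d, j - a - 2d, …` (consecutive sums alternate between `j` and `i`),
it is a path on `2 ((j - a) / d + 1)` vertices, and a path on `n` vertices has `F (n + 2)`
independent sets. Finally `(j - a) / d` is `j / d` for `a ≤ j % d` and `j / d - 1` otherwise.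
-/

open scoped Pointwise
open Finset

def independentSubsets {α : Type*} (R : α → α → Prop) [DecidableRel R] (V : Finset α) :
    Finset (Finset α) :=
  V.powerset.filter fun A => ∀ x ∈ A, ∀ y ∈ A, ¬R x y

theorem mem_independentSubsets {α : Type*} {R : α → α → Prop} [DecidableRel R]
    {V A : Finset α} :
    A ∈ independentSubsets R V ↔ A ⊆ V ∧ ∀ x ∈ A, ∀ y ∈ A, ¬R x y := by
  rw [independentSubsets, mem_filter, mem_powerset]

section Independent

variable {α : Type*} [DecidableEq α] {R : α → α → Prop} [DecidableRel R]

theorem card_independentSubsets_eq_add {V : Finset α} {v : α} (hv : v ∈ V) (hvv : ¬R v v) :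
    #(independentSubsets R V) = #(independentSubsets R (V.erase v)) +
      #(independentSubsets R (V.filter fun x => x ≠ v ∧ ¬R v x ∧ ¬R x v)) := by
  rw [← card_filter_add_card_filter_not (p := fun A => v ∉ A)]
  congr 1
  · congr 1
    ext A
    simp only [mem_filter, mem_independentSubsets, subset_erase]
    tauto
  · refine card_nbij' (·.erase v) (insert v) ?_ ?_ ?_ ?_
    · intro A hA
      simp only [mem_coe, mem_filter, mem_independentSubsets, not_not] at hA ⊢
      obtain ⟨⟨hAV, hAind⟩, hvA⟩ := hA
      refine ⟨fun x hx => ?_,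
        fun x hx y hy => hAind x (mem_of_mem_erase hx) y (mem_of_mem_erase hy)⟩
      obtain ⟨hxv, hxA⟩ := mem_erase.mp hx
      exact mem_filter.mpr ⟨hAV hxA, hxv, hAind v hvA x hxA, hAind x hxA v hvA⟩
    · intro A hA
      simp only [mem_coe, mem_filter, mem_independentSubsets, not_not] at hA ⊢
      obtain ⟨hAV, hAind⟩ := hA
      refine ⟨⟨insert_subset hv fun x hx => (mem_filter.mp (hAV hx)).1, ?_⟩,
        mem_insert_self v A⟩
      intro x hx y hy
      rcases mem_insert.mp hx with hx | hx <;> rcases mem_insert.mp hy with hy | hy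
      · rw [hx, hy]; exact hvv
      · rw [hx]; exact (mem_filter.mp (hAV hy)).2.2.1
      · rw [hy]; exact (mem_filter.mp (hAV hx)).2.2.2
      · exact hAind x hx y hy
    · intro A hA
      simp only [mem_coe, mem_filter, not_not] at hA
      exact insert_erase hA.2
    · intro A hA
      simp only [mem_coe, mem_independentSubsets] at hA
      exact erase_insert fun hvA => (mem_filter.mp (hA.1 hvA)).2.1 rfl

theorem card_independentSubsets_union {s t : Finset α} (hst : Disjoint s t)
    (hR : ∀ x ∈ s, ∀ y ∈ t, ¬R x y ∧ ¬R y x) :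
    #(independentSubsets R (s ∪ t)) =
      #(independentSubsets R s) * #(independentSubsets R t) := by
  rw [← card_product]
  refine card_nbij' (fun A => (A ∩ s, A ∩ t)) (fun P => P.1 ∪ P.2) ?_ ?_ ?_ ?_
  · intro A hA
    simp only [coe_product, Set.mem_prod, mem_coe, mem_independentSubsets] at hA ⊢
    have hind : ∀ u, ∀ x ∈ A ∩ u, ∀ y ∈ A ∩ u, ¬R x y := fun u x hx y hy =>
      hA.2 x (mem_inter.mp hx).1 y (mem_inter.mp hy).1
    exact ⟨⟨inter_subset_right, hind s⟩, ⟨inter_subset_right, hind t⟩⟩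
  · rintro ⟨A, B⟩ hAB
    simp only [coe_product, Set.mem_prod, mem_coe, mem_independentSubsets] at hAB ⊢
    obtain ⟨⟨hAs, hA⟩, hBt, hB⟩ := hAB
    refine ⟨union_subset_union hAs hBt, fun x hx y hy => ?_⟩
    rcases mem_union.mp hx with hx | hx <;> rcases mem_union.mp hy with hy | hy
    exacts [hA x hx y hy, (hR x (hAs hx) y (hBt hy)).1, (hR y (hAs hy) x (hBt hx)).2, hB x hx y hy]
  · intro A hA
    simp only [mem_coe, mem_independentSubsets] at hA
    dsimp only
    rw [← inter_union_distrib_left, inter_eq_left.mpr hA.1]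
  · rintro ⟨A, B⟩ hAB
    simp only [coe_product, Set.mem_prod, mem_coe, mem_independentSubsets] at hAB
    have hA := hAB.1.1
    have hB := hAB.2.1
    simp only [union_inter_distrib_right, inter_eq_left.mpr hA,
      inter_eq_left.mpr hB, disjoint_iff_inter_eq_empty.mp (hst.mono_left hA),
      disjoint_iff_inter_eq_empty.mp (hst.symm.mono_left hB), union_empty, empty_union]

theorem card_independentSubsets_eq_prod_fiber {ι : Type*} [DecidableEq ι] (V : Finset α)
    (I : Finset ι) (g : α → ι) (hg : ∀ x ∈ V, g x ∈ I)
    (hR : ∀ x ∈ V, ∀ y ∈ V, R x y → g x = g y) :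
    #(independentSubsets R V) = ∏ k ∈ I, #(independentSubsets R (V.filter (g · = k))) := by
  induction I using Finset.induction_on generalizing V with
  | empty =>
    obtain rfl : V = ∅ := eq_empty_of_forall_notMem fun x hx => notMem_empty _ (hg x hx)
    rfl
  | @insert k I hk ih =>
    have hV : V.filter (g · = k) ∪ V.filter (fun x => ¬g x = k) = V :=
      filter_union_filter_not_eq _ V
    have hcross : ∀ x ∈ V.filter (g · = k), ∀ y ∈ V.filter (fun x => ¬g x = k),
        ¬R x y ∧ ¬R y x := by
      intro x hx y hy
      obtain ⟨hxV, hxk⟩ := mem_filter.mp hx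
      obtain ⟨hyV, hyk⟩ := mem_filter.mp hy
      exact ⟨fun h => hyk ((hR x hxV y hyV h).symm.trans hxk),
        fun h => hyk ((hR y hyV x hxV h).trans hxk)⟩
    have hrest : ∀ l ∈ I,
        (V.filter (fun x => ¬g x = k)).filter (g · = l) = V.filter (g · = l) := by
      intro l hl
      rw [filter_filter]
      exact filter_congr fun x _ =>
        ⟨And.right, fun h => ⟨h ▸ ne_of_mem_of_not_mem hl hk, h⟩⟩
    have hrest_maps : ∀ x ∈ V.filter (fun x => ¬g x = k), g x ∈ I := fun x hx =>
      (mem_insert.mp (hg x (mem_filter.mp hx).1)).resolve_left (mem_filter.mp hx).2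
    calc #(independentSubsets R V)
        = #(independentSubsets R (V.filter (g · = k))) *
            #(independentSubsets R (V.filter (fun x => ¬g x = k))) := by
          rw [← card_independentSubsets_union (disjoint_filter_filter_not _ _ _) hcross, hV]
      _ = #(independentSubsets R (V.filter (g · = k))) *
            ∏ l ∈ I, #(independentSubsets R (V.filter (g · = l))) := by
          rw [ih _ hrest_maps fun x hx y hy => hR x (filter_subset _ _ hx) y (filter_subset _ _ hy)]
          exact congrArg _ (prod_congr rfl fun l hl => by rw [hrest l hl])
      _ = _ := by rw [prod_insert hk]

theorem card_independentSubsets_image {β : Type*} [DecidableEq β] {R' : β → β → Prop}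
    [DecidableRel R'] {V : Finset β} {f : β → α} (hf : Set.InjOn f V)
    (hR : ∀ x ∈ V, ∀ y ∈ V, R (f x) (f y) ↔ R' x y) :
    #(independentSubsets R (V.image f)) = #(independentSubsets R' V) := by
  symm
  refine card_bij (fun A _ => A.image f) ?_ ?_ ?_
  · intro A hA
    rw [mem_independentSubsets] at hA ⊢
    refine ⟨image_subset_image hA.1, ?_⟩
    simp only [mem_image]
    rintro _ ⟨x, hx, rfl⟩ _ ⟨y, hy, rfl⟩
    rw [hR x (hA.1 hx) y (hA.1 hy)]
    exact hA.2 x hx y hy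
  · intro A hA B hB hAB
    exact image_injOn_powerset_of_injOn hf (mem_powerset.mpr (mem_independentSubsets.mp hA).1)
      (mem_powerset.mpr (mem_independentSubsets.mp hB).1) hAB
  · intro B hB
    obtain ⟨hBV, hB⟩ := mem_independentSubsets.mp hB
    obtain ⟨A, hAV, rfl⟩ := subset_image_iff.mp hBV
    refine ⟨A, mem_independentSubsets.mpr ⟨hAV, fun x hx y hy => ?_⟩, rfl⟩
    rw [← hR x (hAV hx) y (hAV hy)]
    exact hB _ (mem_image_of_mem f hx) _ (mem_image_of_mem f hy)

end Independent

theorem card_independentSubsets_path (n : ℕ) :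
    #(independentSubsets (fun p q => p + 1 = q ∨ q + 1 = p) (range n)) = Nat.fib (n + 2) := by
  induction n using Nat.strong_induction_on with
  | _ n ih =>
    match n, ih with
    | 0, _ => rfl
    | 1, _ => rfl
    | n + 2, ih =>
      have herase : (range (n + 2)).erase (n + 1) = range (n + 1) := by
        rw [range_add_one (n := n + 1), erase_insert notMem_range_self]
      have hfilter : (range (n + 2)).filter (fun x => x ≠ n + 1 ∧
          ¬(n + 1 + 1 = x ∨ x + 1 = n + 1) ∧ ¬(x + 1 = n + 1 ∨ n + 1 + 1 = x)) = range n := by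
        ext x
        simp only [mem_filter, mem_range]
        omega
      rw [card_independentSubsets_eq_add (v := n + 1) (mem_range.mpr (by omega)) (by omega),
        herase, hfilter, ih (n + 1) (by omega), ih n (by omega), Nat.fib_add_two (n := n + 2)]
      ring

/-- With `j = i + d`: the component of `x` is labelled by `k`, where `2 * k + 1` is the odd one
among the residues of `x` and `j - x` modulo `d`. -/
def sumLabel (i d x : ℕ) : ℕ := if Even x then (i + d - x) % d / 2 else x % d / 2

def sumPath (i d a p : ℕ) : ℕ := if Even p then i + d - a - p / 2 * d else a + p / 2 * d

section SumGraph

variable {i d : ℕ}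

theorem sumLabel_lt (hd : Even d) (hd0 : 0 < d) (x : ℕ) : sumLabel i d x < d / 2 := by
  have h2 := Nat.even_iff.mp hd
  have h1 := Nat.mod_lt x hd0
  have h3 := Nat.mod_lt (i + d - x) hd0
  unfold sumLabel
  split_ifs <;> omega

theorem sumLabel_eq_of_add_eq (hi : Odd i) (hd : Even d) {x y : ℕ}
    (h : x + y = i ∨ x + y = i + d) : sumLabel i d x = sumLabel i d y := by
  have hi2 := Nat.odd_iff.mp hi
  have hd2 := Nat.even_iff.mp hd
  have hsub : i + d - x = y ∨ i + d - x = y + d := by omega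
  have hsub' : i + d - y = x ∨ i + d - y = x + d := by omega
  unfold sumLabel
  rcases Nat.even_or_odd x with hx | hx <;> rcases Nat.even_or_odd y with hy | hy
  · have := Nat.even_iff.mp hx; have := Nat.even_iff.mp hy; omega
  · rw [if_pos hx, if_neg (Nat.not_even_iff_odd.mpr hy)]
    rcases hsub with h' | h' <;> simp only [h', Nat.add_mod_right]
  · rw [if_neg (Nat.not_even_iff_odd.mpr hx), if_pos hy]
    rcases hsub' with h' | h' <;> simp only [h', Nat.add_mod_right]
  · have := Nat.odd_iff.mp hx; have := Nat.odd_iff.mp hy; omega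

theorem div_two_mul_le_of_lt (hd0 : 0 < d) {n p : ℕ} (hp : p < 2 * (n / d + 1)) :
    p / 2 * d ≤ n :=
  (Nat.le_div_iff_mul_le hd0).mp (by omega)

theorem filter_sumLabel_eq (hi : Odd i) (hd : Even d) (hd0 : 0 < d) {k : ℕ} (hk : k < d / 2) :
    (range (i + d + 1)).filter (sumLabel i d · = k) =
      (range (2 * ((i + d - (2 * k + 1)) / d + 1))).image (sumPath i d (2 * k + 1)) := by
  have hi2 := Nat.odd_iff.mp hi
  have hd2 := Nat.even_iff.mp hd
  ext x
  simp only [mem_filter, mem_range, mem_image]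
  simp only [sumLabel, sumPath]
  constructor
  · rintro ⟨hx, hlabel⟩
    rcases Nat.even_or_odd x with hxe | hxo
    · rw [if_pos hxe] at hlabel
      have hres : (i + d - x) % d = 2 * k + 1 := by
        have := Nat.even_iff.mp hxe
        have := Nat.mod_mod_of_dvd (i + d - x) (even_iff_two_dvd.mp hd)
        omega
      have hdiv := Nat.mod_add_div' (i + d - x) d
      refine ⟨2 * ((i + d - x) / d), ?_, ?_⟩
      · have : (i + d - x) / d ≤ (i + d - (2 * k + 1)) / d :=
          (Nat.le_div_iff_mul_le hd0).mpr (by omega)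
        omega
      · rw [if_pos (even_two_mul _), Nat.mul_div_cancel_left _ two_pos]
        omega
    · rw [if_neg (Nat.not_even_iff_odd.mpr hxo)] at hlabel
      have hres : x % d = 2 * k + 1 := by
        have := Nat.odd_iff.mp hxo
        have := Nat.mod_mod_of_dvd x (even_iff_two_dvd.mp hd)
        omega
      have hdiv := Nat.mod_add_div' x d
      refine ⟨2 * (x / d) + 1, ?_, ?_⟩
      · have : x / d ≤ (i + d - (2 * k + 1)) / d :=
          (Nat.le_div_iff_mul_le hd0).mpr (by omega)
        omega
      · rw [if_neg (Nat.not_even_iff_odd.mpr (odd_two_mul_add_one _)),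
          show (2 * (x / d) + 1) / 2 = x / d by omega]
        omega
  · rintro ⟨p, hp, rfl⟩
    have hbound := div_two_mul_le_of_lt hd0 hp
    have hmul : p / 2 * d % 2 = 0 := Nat.even_iff.mp (hd.mul_left _)
    have hlt : 2 * k + 1 < d := by omega
    rcases Nat.even_or_odd p with hpe | hpo
    · rw [if_pos hpe]
      refine ⟨by omega, ?_⟩
      rw [if_pos (Nat.even_iff.mpr (by omega)),
        show i + d - (i + d - (2 * k + 1) - p / 2 * d) = 2 * k + 1 + p / 2 * d by omega,
        Nat.add_mul_mod_self_right, Nat.mod_eq_of_lt hlt]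
      omega
    · rw [if_neg (Nat.not_even_iff_odd.mpr hpo)]
      refine ⟨by omega, ?_⟩
      rw [if_neg (Nat.not_even_iff_odd.mpr (Nat.odd_iff.mpr (by omega))),
        Nat.add_mul_mod_self_right, Nat.mod_eq_of_lt hlt]
      omega

theorem sumPath_injOn (hi : Odd i) (hd : Even d) (hd0 : 0 < d) {a : ℕ} (ha : Odd a) :
    Set.InjOn (sumPath i d a) (range (2 * ((i + d - a) / d + 1))) := by
  intro p hp q hq hpq
  simp only [coe_range, Set.mem_Iio] at hp hq
  have := div_two_mul_le_of_lt hd0 hp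
  have := div_two_mul_le_of_lt hd0 hq
  have := Nat.even_iff.mp (hd.mul_left (p / 2))
  have := Nat.even_iff.mp (hd.mul_left (q / 2))
  have := Nat.odd_iff.mp hi
  have := Nat.odd_iff.mp ha
  have := Nat.even_iff.mp hd
  have hpar : p % 2 = q % 2 ∧ p / 2 * d = q / 2 * d := by
    unfold sumPath at hpq
    split_ifs at hpq with hp2 hq2 hq2 <;> simp only [Nat.even_iff] at hp2 hq2 <;> omega
  have := Nat.eq_of_mul_eq_mul_right hd0 hpar.2
  omega

theorem sumPath_add_eq_iff (hi : Odd i) (hd : Even d) (hd0 : 0 < d) {a : ℕ} (ha : Odd a)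
    (had : a ≤ i + d) {p q : ℕ} (hp : p < 2 * ((i + d - a) / d + 1))
    (hq : q < 2 * ((i + d - a) / d + 1)) :
    (sumPath i d a p + sumPath i d a q = i ∨ sumPath i d a p + sumPath i d a q = i + d) ↔
      (p + 1 = q ∨ q + 1 = p) := by
  have := div_two_mul_le_of_lt hd0 hp
  have := div_two_mul_le_of_lt hd0 hq
  have := Nat.even_iff.mp (hd.mul_left (p / 2))
  have := Nat.even_iff.mp (hd.mul_left (q / 2))
  have := Nat.odd_iff.mp hi
  have := Nat.odd_iff.mp ha
  have := Nat.even_iff.mp hd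
  have hpq : p / 2 * d = q / 2 * d + d ↔ p / 2 = q / 2 + 1 := by
    rw [← add_one_mul, Nat.mul_left_inj hd0.ne']
  have hqp : q / 2 * d = p / 2 * d + d ↔ q / 2 = p / 2 + 1 := by
    rw [← add_one_mul, Nat.mul_left_inj hd0.ne']
  have heq : p / 2 * d = q / 2 * d ↔ p / 2 = q / 2 := Nat.mul_left_inj hd0.ne'
  unfold sumPath
  split_ifs with hp2 hq2 hq2 <;> simp only [Nat.even_iff] at hp2 hq2 <;> omega

end SumGraph

theorem filter_notMem_add_eq_independentSubsets {α : Type*} [DecidableEq α] [Add α]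
    (V : Finset α) (i j : α) :
    V.powerset.filter (fun A => i ∉ A + A ∧ j ∉ A + A) =
      independentSubsets (fun x y => x + y = i ∨ x + y = j) V := by
  refine filter_congr fun A _ => ?_
  simp only [mem_add, not_exists, not_and, not_or]
  exact ⟨fun h x hx y hy => ⟨h.1 x hx y hy, h.2 x hx y hy⟩,
    fun h => ⟨fun x hx y hy => (h x hx y hy).1, fun x hx y hy => (h x hx y hy).2⟩⟩

theorem card_independentSubsets_sumGraph {i d : ℕ} (hi : Odd i) (hd : Even d) (hd0 : 0 < d) :
    #(independentSubsets (fun x y => x + y = i ∨ x + y = i + d) (range (i + d + 1))) =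
      ∏ k ∈ range (d / 2), Nat.fib (2 * ((i + d - (2 * k + 1)) / d + 1) + 2) := by
  rw [card_independentSubsets_eq_prod_fiber _ (range (d / 2)) (sumLabel i d)
    (fun x _ => mem_range.mpr (sumLabel_lt hd hd0 x))
    (fun x _ y _ h => sumLabel_eq_of_add_eq hi hd h)]
  refine prod_congr rfl fun k hk => ?_
  have hk' : 2 * k + 1 ≤ i + d := by have := mem_range.mp hk; omega
  rw [filter_sumLabel_eq hi hd hd0 (mem_range.mp hk),
    card_independentSubsets_image (sumPath_injOn hi hd hd0 (odd_two_mul_add_one k))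
      (fun p hp q hq => sumPath_add_eq_iff hi hd hd0 (odd_two_mul_add_one k) hk'
        (mem_range.mp hp) (mem_range.mp hq)),
    card_independentSubsets_path]

theorem prod_range_fib_eq {j d : ℕ} (hj : Odd j) (hd : Even d) (hd0 : 0 < d) (hdj : d ≤ j) :
    ∏ k ∈ range (d / 2), Nat.fib (2 * ((j - (2 * k + 1)) / d + 1) + 2) =
      Nat.fib (2 * (j / d) + 2) ^ (d / 2 - (j % d + 1) / 2) *
        Nat.fib (2 * (j / d) + 4) ^ ((j % d + 1) / 2) := by
  have hdiv := Nat.div_add_mod' j d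
  have he : j % d < d := Nat.mod_lt j hd0
  have he2 : j % d % 2 = 1 := by
    rw [Nat.mod_mod_of_dvd j (even_iff_two_dvd.mp hd)]; exact Nat.odd_iff.mp hj
  have hM : 0 < j / d := Nat.div_pos hdj hd0
  have hd2 := Nat.even_iff.mp hd
  have hsucc : (j / d - 1 + 1) * d = j / d * d := by rw [Nat.sub_add_cancel hM]
  rw [← prod_range_mul_prod_Ico _ (show (j % d + 1) / 2 ≤ d / 2 by omega), mul_comm]
  congr 1
  · rw [prod_congr rfl fun k hk => ?_, prod_const, Nat.card_Ico]
    have := mem_Ico.mp hk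
    rw [Nat.div_eq_of_lt_le (k := j / d - 1) (by rw [Nat.sub_one_mul]; omega) (by omega)]
    congr 1
    omega
  · rw [prod_congr rfl fun k hk => ?_, prod_const, card_range]
    have := mem_range.mp hk
    rw [Nat.div_eq_of_lt_le (k := j / d) (by omega) (by rw [add_one_mul]; omega)]
    congr 1

theorem count_miss_two_sums_general (i j : ℕ) (hi : Odd i) (hj : Odd j)
    (hij : i < j) :
    (((Finset.range (j + 1)).powerset.filter
        (fun A : Finset ℕ => i ∉ A + A ∧ j ∉ A + A)).card =
      Nat.fib (2 * ((i + 1 + (j - i) - 1) / (j - i)) + 2) ^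
          (((j - i) * ((i + 1 + (j - i) - 1) / (j - i)) - (i + 1)) / 2) *
        Nat.fib (2 * ((i + 1 + (j - i) - 1) / (j - i)) + 4) ^
          ((j + 1 - (j - i) * ((i + 1 + (j - i) - 1) / (j - i))) / 2)) ∧
    ((((Finset.range (j + 1)).powerset.filter
        (fun A : Finset ℕ => i ∉ A + A ∧ j ∉ A + A)).card : ℚ) / 2 ^ (j + 1) =
      (Nat.fib (2 * ((i + 1 + (j - i) - 1) / (j - i)) + 2) ^
          (((j - i) * ((i + 1 + (j - i) - 1) / (j - i)) - (i + 1)) / 2) *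
        Nat.fib (2 * ((i + 1 + (j - i) - 1) / (j - i)) + 4) ^
          ((j + 1 - (j - i) * ((i + 1 + (j - i) - 1) / (j - i))) / 2) : ℚ) /
        2 ^ (j + 1)) := by
  obtain ⟨d, rfl⟩ : ∃ d, j = i + d := ⟨j - i, by omega⟩
  have hd : Even d := (Nat.odd_add.mp hj).mp hi
  have hcount := card_independentSubsets_sumGraph hi hd (by omega)
  rw [← filter_notMem_add_eq_independentSubsets,
    prod_range_fib_eq hj hd (by omega) (by omega)] at hcount
  have hdiv := Nat.div_add_mod (i + d) d
  have he2 : (i + d) % d % 2 = 1 := by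
    rw [Nat.mod_mod_of_dvd _ (even_iff_two_dvd.mp hd)]; exact Nat.odd_iff.mp hj
  rw [Nat.add_sub_cancel_left, show i + 1 + d - 1 = i + d by omega,
    show (d * ((i + d) / d) - (i + 1)) / 2 = d / 2 - ((i + d) % d + 1) / 2 by omega,
    show (i + d + 1 - d * ((i + d) / d)) / 2 = ((i + d) % d + 1) / 2 by omega]
  exact ⟨hcount, by rw [hcount]; push_cast; ring⟩

/-- For odd positive integers `i < j`, the number of subsets `A ⊆ {0,...,j}` with
`i ∉ A + A` and `j ∉ A + A` equals `F_{q+2}^r · F_{q+4}^{r'}`, where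
`q = 2⌈(i+1)/(j-i)⌉`, `r = ((j-i)⌈(i+1)/(j-i)⌉ - (i+1))/2`,
`r' = (j+1 - (j-i)⌈(i+1)/(j-i)⌉)/2` and `F` is the Fibonacci sequence (`F₁ = F₂ = 1`).
Equivalently, for a uniformly random subset `A` of `{0,...,j}`, the probability that
neither `i` nor `j` lies in `A + A` is `F_{q+2}^r · F_{q+4}^{r'} / 2^(j+1)`. -/
theorem count_miss_two_sums (i j : ℕ) (hi : Odd i) (hj : Odd j) (h0 : 0 < i)
    (hij : i < j) :
    (((Finset.range (j + 1)).powerset.filter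
        (fun A : Finset ℕ => i ∉ A + A ∧ j ∉ A + A)).card =
      Nat.fib (2 * ((i + 1 + (j - i) - 1) / (j - i)) + 2) ^
          (((j - i) * ((i + 1 + (j - i) - 1) / (j - i)) - (i + 1)) / 2) *
        Nat.fib (2 * ((i + 1 + (j - i) - 1) / (j - i)) + 4) ^
          ((j + 1 - (j - i) * ((i + 1 + (j - i) - 1) / (j - i))) / 2)) ∧
    ((((Finset.range (j + 1)).powerset.filter
        (fun A : Finset ℕ => i ∉ A + A ∧ j ∉ A + A)).card : ℚ) / 2 ^ (j + 1) =
      (Nat.fib (2 * ((i + 1 + (j - i) - 1) / (j - i)) + 2) ^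
          (((j - i) * ((i + 1 + (j - i) - 1) / (j - i)) - (i + 1)) / 2) *
        Nat.fib (2 * ((i + 1 + (j - i) - 1) / (j - i)) + 4) ^
          ((j + 1 - (j - i) * ((i + 1 + (j - i) - 1) / (j - i))) / 2) : ℚ) /
        2 ^ (j + 1)) :=
  count_miss_two_sums_general i j hi hj hij
end

section
/- Let k, m be positive integers with m | k and q := k/m even, and let A be a uniformly random subset of {0,1,...,k+2m−1}. Then the probability that none of k, k+1, ..., k+2m−1 lies in A + A is at most 2^{q/2}·(1/2^m)^{q/2+1} = 2^{k/2m}·(1/2)^{(k+2m)/2}. -/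
/-!
Cut `{0, …, k + 2m - 1}` into the `q + 2` blocks `[jm, jm + m)`. Sums from the blocks `j` and
`q - j` lie in the window `[k, k + 2m - 1]`, so a set `A` whose sumset misses the window avoids one
block of each pair `{j, q - j}` with `j < q/2`, and the middle block `q/2`. Once it is chosen which
block of each pair is avoided (`2^(q/2)` choices), `A` is confined to the complement of `q/2 + 1`
blocks, which leaves `2^((q/2 + 1) m)` possibilities out of `2^((q + 2) m)`.
-/

open Finset
open scoped Pointwise

lemma card_le_card_mul_two_pow_of_forall_exists_subset {α ι : Type*}
    {𝒜 : Finset (Finset α)} {I : Finset ι} {T : ι → Finset α} {d : ℕ}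
    (hT : ∀ i ∈ I, #(T i) ≤ d) (h𝒜 : ∀ A ∈ 𝒜, ∃ i ∈ I, A ⊆ T i) :
    #𝒜 ≤ #I * 2 ^ d := by
  classical
  calc #𝒜 ≤ #(I.biUnion fun i => (T i).powerset) := by
        refine card_le_card fun A hA => ?_
        obtain ⟨i, hi, hAi⟩ := h𝒜 A hA
        exact mem_biUnion.2 ⟨i, hi, mem_powerset.2 hAi⟩
    _ ≤ ∑ i ∈ I, #(T i).powerset := card_biUnion_le
    _ ≤ ∑ _i ∈ I, 2 ^ d :=
        sum_le_sum fun i hi => by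
          rw [card_powerset]
          exact Nat.pow_le_pow_right two_pos (hT i hi)
    _ = #I * 2 ^ d := by rw [sum_const, smul_eq_mul]

def block (m j : ℕ) : Finset ℕ := Ico (j * m) (j * m + m)

lemma mem_block {m j a : ℕ} : a ∈ block m j ↔ j * m ≤ a ∧ a < j * m + m := mem_Ico

lemma card_block (m j : ℕ) : #(block m j) = m := by simp [block]

lemma div_eq_of_mem_block {m j a : ℕ} (ha : a ∈ block m j) : a / m = j :=
  Nat.div_eq_of_lt_le (mem_block.1 ha).1 (add_one_mul j m ▸ (mem_block.1 ha).2)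

lemma disjoint_block {m i j : ℕ} (hij : i ≠ j) : Disjoint (block m i) (block m j) :=
  disjoint_left.2 fun _ hai haj =>
    hij ((div_eq_of_mem_block hai).symm.trans (div_eq_of_mem_block haj))

lemma card_biUnion_block (m : ℕ) (s : Finset ℕ) : #(s.biUnion (block m)) = #s * m := by
  rw [card_biUnion fun i _ j _ hij => disjoint_block hij, sum_const_nat fun j _ => card_block m j]

lemma biUnion_block_subset_range {m n : ℕ} {s : Finset ℕ} (hs : ∀ j ∈ s, j < n) :
    s.biUnion (block m) ⊆ range (n * m) := by
  intro a ha
  obtain ⟨j, hj, haj⟩ := mem_biUnion.1 ha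
  rw [mem_range]
  calc a < (j + 1) * m := add_one_mul j m ▸ (mem_block.1 haj).2
    _ ≤ n * m := Nat.mul_le_mul_right m (hs j hj)

lemma add_mem_Icc_of_mem_block {m i j a b : ℕ} (ha : a ∈ block m i) (hb : b ∈ block m j) :
    a + b ∈ Icc ((i + j) * m) ((i + j) * m + 2 * m - 1) := by
  rw [mem_block] at ha hb
  rw [mem_Icc, add_mul]
  omega

lemma disjoint_block_or_disjoint_block {A : Finset ℕ} {k m i j : ℕ} (hij : (i + j) * m = k)
    (hA : ∀ t ∈ Icc k (k + 2 * m - 1), t ∉ A + A) :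
    Disjoint A (block m i) ∨ Disjoint A (block m j) := by
  by_contra! hAij
  obtain ⟨a, haA, hai⟩ := not_disjoint_iff.1 hAij.1
  obtain ⟨b, hbA, hbj⟩ := not_disjoint_iff.1 hAij.2
  exact hA (a + b) (hij ▸ add_mem_Icc_of_mem_block hai hbj) (add_mem_add haA hbA)

/-- The indices of the `h + 1` blocks avoided when, for each `j < h`, block `j` is avoided if
`j ∈ ε` and block `2h - j` otherwise. -/
def avoidedIndices (h : ℕ) (ε : Finset ℕ) : Finset ℕ :=
  insert h ((range h).image fun j => if j ∈ ε then j else 2 * h - j)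

lemma lt_of_mem_avoidedIndices {h j : ℕ} {ε : Finset ℕ} (hj : j ∈ avoidedIndices h ε) :
    j < 2 * h + 2 := by
  simp only [avoidedIndices, mem_insert, mem_image, mem_range] at hj
  rcases hj with rfl | ⟨i, hi, rfl⟩
  · omega
  · split <;> omega

lemma card_avoidedIndices (h : ℕ) (ε : Finset ℕ) : #(avoidedIndices h ε) = h + 1 := by
  rw [avoidedIndices, card_insert_of_notMem, card_image_of_injOn, card_range]
  · intro i hi j hj hij
    simp only [coe_range, Set.mem_Iio] at hi hj
    dsimp only at hij
    split_ifs at hij <;> omega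
  · simp only [mem_image, mem_range, not_exists, not_and]
    intro j hj
    split <;> omega

lemma card_range_sdiff_avoidedIndices (h m : ℕ) (ε : Finset ℕ) :
    #(range ((2 * h + 2) * m) \ (avoidedIndices h ε).biUnion (block m)) = (h + 1) * m := by
  rw [card_sdiff_of_subset (biUnion_block_subset_range fun _ => lt_of_mem_avoidedIndices),
    card_biUnion_block, card_avoidedIndices, card_range, show 2 * h + 2 = 2 * (h + 1) by ring, mul_assoc, two_mul, Nat.add_sub_cancel]

lemma disjoint_biUnion_avoidedIndices {A : Finset ℕ} {h m : ℕ}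
    (hA : ∀ t ∈ Icc (2 * h * m) (2 * h * m + 2 * m - 1), t ∉ A + A) :
    Disjoint A ((avoidedIndices h ((range h).filter fun j => Disjoint A (block m j))).biUnion
      (block m)) := by
  rw [disjoint_biUnion_right]
  intro j hj
  simp only [avoidedIndices, mem_insert, mem_image, mem_range] at hj
  rcases hj with rfl | ⟨i, hi, rfl⟩
  · exact (disjoint_block_or_disjoint_block (by ring) hA).elim id id
  · split_ifs with hAi
    · exact (mem_filter.1 hAi).2
    · have hAi' : ¬Disjoint A (block m i) := fun hd => hAi (mem_filter.2 ⟨mem_range.2 hi, hd⟩)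
      exact (disjoint_block_or_disjoint_block (by rw [Nat.add_sub_cancel' (by omega)]) hA)
        |>.resolve_left hAi'

lemma card_filter_forall_notMem_add_le {k h m : ℕ} (hk : k = 2 * h * m) :
    #((range (k + 2 * m)).powerset.filter
        fun A : Finset ℕ => ∀ t ∈ Icc k (k + 2 * m - 1), t ∉ A + A) ≤
      2 ^ h * 2 ^ ((h + 1) * m) := by
  subst hk
  have hN : 2 * h * m + 2 * m = (2 * h + 2) * m := by ring
  calc _ ≤ #(range h).powerset * 2 ^ ((h + 1) * m) :=
        card_le_card_mul_two_pow_of_forall_exists_subset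
          (fun ε _ => (card_range_sdiff_avoidedIndices h m ε).le) fun A hA => by
            rw [mem_filter, mem_powerset] at hA
            exact ⟨_, mem_powerset.2 (filter_subset _ _),
              subset_sdiff.2 ⟨hN ▸ hA.1, disjoint_biUnion_avoidedIndices hA.2⟩⟩
    _ = 2 ^ h * 2 ^ ((h + 1) * m) := by rw [card_powerset, card_range]

theorem prob_consecutive_missing_le_general (k m : ℕ)
    (hdvd : m ∣ k) (hq : Even (k / m)) :
    (((Finset.range (k + 2 * m)).powerset.filter
        (fun A : Finset ℕ => ∀ t ∈ Finset.Icc k (k + 2 * m - 1), t ∉ A + A)).card : ℚ) /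
        2 ^ (k + 2 * m) ≤
      2 ^ (k / m / 2) * ((1 : ℚ) / 2 ^ m) ^ (k / m / 2 + 1) := by
  obtain ⟨h, hh⟩ := hq
  have hk : k = 2 * h * m := by rw [← Nat.div_mul_cancel hdvd, hh, two_mul]
  rw [show k / m / 2 = h by omega, div_le_iff₀ (by positivity)]
  calc _ ≤ ((2 ^ h * 2 ^ ((h + 1) * m) : ℕ) : ℚ) := by
        exact_mod_cast card_filter_forall_notMem_add_le hk
    _ = 2 ^ h * ((1 : ℚ) / 2 ^ m) ^ (h + 1) * 2 ^ (k + 2 * m) := by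
        rw [hk, show 2 * h * m + 2 * m = (h + 1) * m + (h + 1) * m by ring]
        push_cast
        rw [pow_add, div_pow, one_pow, ← pow_mul, mul_comm m]
        field_simp
        ring

/-- Let `k, m` be positive integers with `m ∣ k` and `q := k/m` even. For a uniformly
random subset `A` of `{0,...,k+2m-1}`, the probability that none of
`k, k+1, ..., k+2m-1` lies in `A + A` is at most
`2^(q/2) · (1/2^m)^(q/2+1) = 2^(k/(2m)) · (1/2)^((k+2m)/2)`. -/
theorem prob_consecutive_missing_le (k m : ℕ) (hm : 0 < m) (hk : 0 < k)
    (hdvd : m ∣ k) (hq : Even (k / m)) :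
    (((Finset.range (k + 2 * m)).powerset.filter
        (fun A : Finset ℕ => ∀ t ∈ Finset.Icc k (k + 2 * m - 1), t ∉ A + A)).card : ℚ) /
        2 ^ (k + 2 * m) ≤
      2 ^ (k / m / 2) * ((1 : ℚ) / 2 ^ m) ^ (k / m / 2 + 1) :=
  prob_consecutive_missing_le_general k m hdvd hq
end

section
/- For every even positive integer k and n > k, the number of subsets A ⊆ {0,1,...,n−1} whose sumset A+A misses exactly the first k elements of [0, 2n−2] (i.e., A + A = [k, 2n−2]) is at least 2^{n − k/2 − 10}. Consequently, the probability that |[0,2n−2] \ (A+A)| = k for uniformly random A ⊆ {0,...,n−1} is at least 2^{−k/2 − 10}. -/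
/-!
Shifting by `k / 2` reduces the count to sets `A ⊆ [0, m)`, `m = n - k / 2`, with
`A + A = [0, 2m - 2]`. Fix the skeleton `S = {0, 1, 3, 4, m-5, m-4, m-2, m-1}`: since
`{0, 1, 3, 4} + {0, 1, 3, 4} = [0, 8]`, every `A ⊇ S` has `[0, 8]`, `[m-5, m+3]` and
`[2m-10, 2m-2]` in `A + A`. A sum `s ∈ [9, m-6]` is missed only if `A` contains none of the
pairwise disjoint blocks `{j, s-j} \ S`, `j < (s+1)/2`; four of them are singletons and the
others have at most two elements, so at most a fraction `(1/16)(3/4)^((s+1)/2 - 4)` of the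
`2^(m-8)` sets `A ⊇ S` miss `s`. Summed over `s`, and by the reflection `x ↦ m-1-x` over the
mirror range `[m+4, 2m-11]`, these fractions add up to at most `3/4`, which leaves `2^(m-10)`
sets with full sumset.
-/

open Finset
open scoped Pointwise

theorem card_filter_forall_not_subset_le {ι α : Type*} [DecidableEq ι] [DecidableEq α]
    (f : ι → Finset α) (J : Finset ι) (F : Finset α) (hsub : ∀ j ∈ J, f j ⊆ F)
    (hdisj : (J : Set ι).PairwiseDisjoint f) :
    (#{B ∈ F.powerset | ∀ j ∈ J, ¬f j ⊆ B} : ℚ) ≤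
      2 ^ #F * ∏ j ∈ J, (1 - (1 / 2 : ℚ) ^ #(f j)) := by
  induction J using Finset.induction_on generalizing F with
  | empty => simp
  | @insert a J ha ih =>
    have hfa : f a ⊆ F := hsub a (mem_insert_self a J)
    set T := {B ∈ (F \ f a).powerset | ∀ j ∈ J, ¬f j ⊆ B}
    have hsplit : #{B ∈ F.powerset | ∀ j ∈ insert a J, ¬f j ⊆ B} ≤
        #((f a).powerset.erase (f a)) * #T := by
      rw [← card_product]
      refine card_le_card_of_injOn (fun B => (B ∩ f a, B \ f a)) ?_ ?_
      · intro B hB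
        simp only [mem_coe, mem_filter, mem_powerset, forall_mem_insert] at hB
        simp only [coe_product, Set.mem_prod, mem_coe, mem_erase, mem_powerset, T, mem_filter]
        refine ⟨⟨fun h => hB.2.1 (inter_eq_right.mp h), inter_subset_right⟩,
          sdiff_subset_sdiff hB.1 le_rfl, fun j hj h => hB.2.2 j hj (h.trans sdiff_subset)⟩
      · intro B _ C _ h
        simp only [Prod.mk.injEq] at h
        rw [← sdiff_union_inter B (f a), ← sdiff_union_inter C (f a), h.1, h.2]
    have hT : (#T : ℚ) ≤ 2 ^ #(F \ f a) * ∏ j ∈ J, (1 - (1 / 2 : ℚ) ^ #(f j)) := by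
      refine ih _ (fun j hj => subset_sdiff.mpr ⟨hsub j (mem_insert_of_mem hj), ?_⟩)
        (hdisj.subset (by simp))
      exact hdisj (mem_insert_of_mem hj) (mem_insert_self a J) (fun h => ha (h ▸ hj))
    have hcard : (#((f a).powerset.erase (f a)) : ℚ) = 2 ^ #(f a) - 1 := by
      rw [card_erase_of_mem (mem_powerset_self _), card_powerset, Nat.cast_sub Nat.one_le_two_pow]
      push_cast; rfl
    have hpow : (2 : ℚ) ^ #F = 2 ^ #(F \ f a) * 2 ^ #(f a) := by
      rw [← pow_add, card_sdiff_add_card_eq_card hfa]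
    have hhalf : (1 / 2 : ℚ) ^ #(f a) * 2 ^ #(f a) = 1 := by
      rw [← mul_pow]; norm_num
    rw [prod_insert ha]
    calc (#{B ∈ F.powerset | ∀ j ∈ insert a J, ¬f j ⊆ B} : ℚ)
        ≤ #((f a).powerset.erase (f a)) * #T := by exact_mod_cast hsplit
      _ ≤ (2 ^ #(f a) - 1) * (2 ^ #(F \ f a) * ∏ j ∈ J, (1 - (1 / 2 : ℚ) ^ #(f j))) := by
        rw [hcard]
        exact mul_le_mul_of_nonneg_left hT (sub_nonneg.mpr (one_le_pow₀ one_le_two))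
      _ = _ := by
        rw [hpow]
        linear_combination (2 ^ #(F \ f a) * ∏ j ∈ J, (1 - (1 / 2 : ℚ) ^ #(f j))) * hhalf

theorem sum_range_two_mul_pow_div_two {R : Type*} [CommSemiring R] (x : R) (N : ℕ) :
    ∑ r ∈ range (2 * N), x ^ (r / 2) = 2 * ∑ t ∈ range N, x ^ t := by
  induction N with
  | zero => simp
  | succ N ih =>
    rw [show 2 * (N + 1) = 2 * N + 1 + 1 by ring, sum_range_succ, sum_range_succ, ih,
      sum_range_succ, Nat.mul_div_cancel_left _ two_pos,
      show (2 * N + 1) / 2 = N by omega]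
    ring

theorem sum_range_pow_div_two_le {K : Type*} [Field K] [LinearOrder K] [IsStrictOrderedRing K]
    {x : K} (hx₀ : 0 ≤ x) (hx₁ : x < 1) (N : ℕ) :
    ∑ r ∈ range N, x ^ (r / 2) ≤ 2 / (1 - x) :=
  calc ∑ r ∈ range N, x ^ (r / 2)
      ≤ ∑ r ∈ range (2 * N), x ^ (r / 2) :=
        sum_le_sum_of_subset_of_nonneg (range_subset_range.mpr (by omega))
          (fun _ _ _ => pow_nonneg hx₀ _)
    _ = 2 * ∑ t ∈ Ico 0 N, x ^ t := by rw [sum_range_two_mul_pow_div_two, range_eq_Ico]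
    _ ≤ 2 * (x ^ 0 / (1 - x)) := by gcongr; exact geom_sum_Ico_le_of_lt_one hx₀ hx₁
    _ = 2 / (1 - x) := by ring

lemma one_sub_half_pow_le_three_quarters {n : ℕ} (hn : n ≤ 2) :
    1 - (1 / 2 : ℚ) ^ n ≤ 3 / 4 := by
  interval_cases n <;> norm_num

lemma image_add_right_add_image_add_right {α : Type*} [AddCommSemigroup α] [DecidableEq α]
    (s t : Finset α) (a b : α) :
    s.image (· + a) + t.image (· + b) = (s + t).image (· + (a + b)) := by
  ext x
  simp only [mem_add, mem_image]
  constructor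
  · rintro ⟨_, ⟨x, hx, rfl⟩, _, ⟨y, hy, rfl⟩, rfl⟩
    exact ⟨x + y, ⟨x, hx, y, hy, rfl⟩, add_add_add_comm x y a b⟩
  · rintro ⟨_, ⟨x, hx, y, hy, rfl⟩, rfl⟩
    exact ⟨x + a, ⟨x, hx, rfl⟩, y + b, ⟨y, hy, rfl⟩, add_add_add_comm x a y b⟩

lemma range_add_range {m : ℕ} (hm : 0 < m) : range m + range m = Icc 0 (2 * m - 2) := by
  ext x
  simp only [mem_add, mem_range, mem_Icc]
  constructor
  · rintro ⟨a, ha, b, hb, rfl⟩; omega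
  · intro hx; exact ⟨min x (m - 1), by omega, x - min x (m - 1), by omega, by omega⟩

def skeleton (m : ℕ) : Finset ℕ := {0, 1, 3, 4, m - 5, m - 4, m - 2, m - 1}

section Skeleton

variable {m : ℕ}

lemma mem_skeleton {x : ℕ} :
    x ∈ skeleton m ↔
      x = 0 ∨ x = 1 ∨ x = 3 ∨ x = 4 ∨
        x = m - 5 ∨ x = m - 4 ∨ x = m - 2 ∨ x = m - 1 := by
  simp only [skeleton, mem_insert, mem_singleton]

lemma skeleton_subset_range (hm : 5 ≤ m) : skeleton m ⊆ range m := fun x hx => by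
  rw [mem_skeleton] at hx; rw [mem_range]; omega

lemma card_skeleton (hm : 10 ≤ m) : #(skeleton m) = 8 := by
  simp only [skeleton]
  repeat rw [card_insert_of_notMem (by simp only [mem_insert, mem_singleton]; omega)]
  rfl

lemma sub_mem_skeleton {x : ℕ} (hm : 5 ≤ m) (hx : x ∈ skeleton m) :
    m - 1 - x ∈ skeleton m := by
  rw [mem_skeleton] at hx ⊢; omega

lemma mem_skeleton_add_skeleton {x : ℕ} (hm : 5 ≤ m)
    (hx : x ≤ 8 ∨ m - 5 ≤ x ∧ x ≤ m + 3 ∨ 2 * m - 10 ≤ x ∧ x ≤ 2 * m - 2) :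
    x ∈ skeleton m + skeleton m := by
  have hcore : ({0, 1, 3, 4} : Finset ℕ) + {0, 1, 3, 4} = range 9 := by decide
  have hshift : ∀ a ∈ ({0, 1, 3, 4} : Finset ℕ), ∀ c ∈ ({0, m - 5} : Finset ℕ),
      a + c ∈ skeleton m := by
    intro a ha c hc
    simp only [mem_insert, mem_singleton] at ha hc
    rw [mem_skeleton]; omega
  obtain ⟨c, hc, d, hd, y, hy, rfl⟩ :
      ∃ c ∈ ({0, m - 5} : Finset ℕ), ∃ d ∈ ({0, m - 5} : Finset ℕ),
        ∃ y < 9, x = y + (c + d) := by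
    rcases hx with hx | hx | hx
    · exact ⟨0, by simp, 0, by simp, x, by omega, rfl⟩
    · exact ⟨m - 5, by simp, 0, by simp, x - (m - 5), by omega, by omega⟩
    · exact ⟨m - 5, by simp, m - 5, by simp, x - 2 * (m - 5), by omega, by omega⟩
  obtain ⟨a, ha, b, hb, rfl⟩ := mem_add.mp (hcore ▸ mem_range.mpr hy)
  exact mem_add.mpr ⟨a + c, hshift a ha c hc, b + d, hshift b hb d hd, by ring⟩

end Skeleton

def missingSumSets (m s : ℕ) : Finset (Finset ℕ) :=
  {A ∈ Icc (skeleton m) (range m) | s ∉ A + A}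

def sumBlock (m s j : ℕ) : Finset ℕ := {j, s - j} \ skeleton m

section MissingSums

variable {m s : ℕ}

lemma card_missingSumSets_le_card_filter {J : Finset ℕ} (hJ : ∀ j ∈ J, j ≤ s) :
    #(missingSumSets m s) ≤
      #{B ∈ (range m \ skeleton m).powerset | ∀ j ∈ J, ¬sumBlock m s j ⊆ B} := by
  refine card_le_card_of_injOn (· \ skeleton m) (fun A hA => ?_) (fun A hA B hB h => ?_)
  · simp only [missingSumSets, mem_coe, mem_filter, mem_Icc] at hA
    simp only [mem_coe, mem_filter, mem_powerset]
    refine ⟨sdiff_subset_sdiff hA.1.2 le_rfl, fun j hj hsub => hA.2 ?_⟩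
    have hmem : ∀ x ∈ ({j, s - j} : Finset ℕ), x ∈ A := fun x hx => by
      by_cases hxS : x ∈ skeleton m
      · exact hA.1.1 hxS
      · exact (mem_sdiff.mp (hsub (mem_sdiff.mpr ⟨hx, hxS⟩))).1
    have := add_mem_add (hmem j (by simp)) (hmem (s - j) (by simp))
    rwa [Nat.add_sub_cancel' (hJ j hj)] at this
  · simp only [missingSumSets, coe_filter, mem_Icc] at hA hB
    rw [← union_sdiff_of_subset hA.1.1, ← union_sdiff_of_subset hB.1.1]
    exact congrArg (skeleton m ∪ ·) h

lemma pairwiseDisjoint_sumBlock :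
    (range ((s + 1) / 2) : Set ℕ).PairwiseDisjoint (sumBlock m s) := by
  intro i hi j hj hij
  simp only [coe_range, Set.mem_Iio] at hi hj
  rw [Function.onFun, disjoint_left]
  intro x hxi hxj
  simp only [sumBlock, mem_sdiff, mem_insert, mem_singleton] at hxi hxj
  omega

lemma prod_sumBlock_le (hs : 9 ≤ s) (hsm : s ≤ m - 6) :
    ∏ j ∈ range ((s + 1) / 2), (1 - (1 / 2 : ℚ) ^ #(sumBlock m s j)) ≤
      (3 / 4) ^ ((s + 1) / 2 - 4) * (1 / 2) ^ 4 := by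
  have hcore : ({0, 1, 3, 4} : Finset ℕ) ⊆ range ((s + 1) / 2) := by
    intro x hx; simp only [mem_insert, mem_singleton] at hx; simp only [mem_range]; omega
  have hsingle : ∀ j ∈ ({0, 1, 3, 4} : Finset ℕ), sumBlock m s j = {s - j} := by
    intro j hj
    simp only [mem_insert, mem_singleton] at hj
    ext x
    simp only [sumBlock, mem_sdiff, mem_insert, mem_singleton, mem_skeleton]
    omega
  have hcore_prod :
      ∏ j ∈ ({0, 1, 3, 4} : Finset ℕ), (1 - (1 / 2 : ℚ) ^ #(sumBlock m s j)) =
        (1 / 2) ^ 4 := by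
    rw [prod_congr rfl fun j hj => by rw [hsingle j hj, card_singleton]]
    norm_num
  have hrest :
      ∏ j ∈ range ((s + 1) / 2) \ {0, 1, 3, 4}, (1 - (1 / 2 : ℚ) ^ #(sumBlock m s j)) ≤
        (3 / 4) ^ ((s + 1) / 2 - 4) :=
    calc _ ≤ ∏ j ∈ range ((s + 1) / 2) \ {0, 1, 3, 4}, (3 / 4 : ℚ) :=
          prod_le_prod (fun j _ => sub_nonneg.mpr (pow_le_one₀ (by norm_num) (by norm_num)))
            fun j _ => one_sub_half_pow_le_three_quarters
              ((card_le_card sdiff_subset).trans card_le_two)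
      _ = (3 / 4) ^ ((s + 1) / 2 - 4) := by
          rw [prod_const, card_sdiff_of_subset hcore, card_range]; rfl
  rw [← prod_sdiff hcore, hcore_prod]
  gcongr

theorem card_missingSumSets_le (hm : 10 ≤ m) (hs : 9 ≤ s) (hsm : s ≤ m - 6) :
    (#(missingSumSets m s) : ℚ) ≤
      2 ^ (m - 8) * ((3 / 4) ^ ((s + 1) / 2 - 4) * (1 / 2) ^ 4) := by
  have hblocks : ∀ j ∈ range ((s + 1) / 2), sumBlock m s j ⊆ range m \ skeleton m :=
    fun j hj => sdiff_subset_sdiff (fun x hx => by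
      simp only [mem_insert, mem_singleton] at hx; simp only [mem_range] at hj ⊢; omega) le_rfl
  have hF : #(range m \ skeleton m) = m - 8 := by
    rw [card_sdiff_of_subset (skeleton_subset_range (by omega)), card_range, card_skeleton hm]
  calc (#(missingSumSets m s) : ℚ)
      ≤ 2 ^ #(range m \ skeleton m) *
          ∏ j ∈ range ((s + 1) / 2), (1 - (1 / 2 : ℚ) ^ #(sumBlock m s j)) :=
        (Nat.cast_le.mpr (card_missingSumSets_le_card_filter fun j hj => by
          rw [mem_range] at hj; omega)).trans
          (card_filter_forall_not_subset_le _ _ _ hblocks pairwiseDisjoint_sumBlock)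
    _ ≤ _ := by rw [hF]; gcongr; exact prod_sumBlock_le hs hsm

lemma reflect_mem_missingSumSets {A : Finset ℕ} (hm : 5 ≤ m) (hs : s ≤ 2 * m - 2)
    (hA : A ∈ missingSumSets m s) :
    A.image (m - 1 - ·) ∈ missingSumSets m (2 * m - 2 - s) := by
  simp only [missingSumSets, mem_filter, mem_Icc] at hA ⊢
  obtain ⟨⟨hSA, hAm⟩, hsA⟩ := hA
  refine ⟨⟨fun x hx => ?_, fun x hx => ?_⟩, fun h => ?_⟩
  · have := mem_range.mp (skeleton_subset_range hm hx)
    exact mem_image.mpr ⟨m - 1 - x, hSA (sub_mem_skeleton hm hx), by omega⟩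
  · obtain ⟨a, -, rfl⟩ := mem_image.mp hx
    rw [mem_range]; omega
  · obtain ⟨_, ha', _, hb', hab⟩ := mem_add.mp h
    obtain ⟨a, ha, rfl⟩ := mem_image.mp ha'
    obtain ⟨b, hb, rfl⟩ := mem_image.mp hb'
    have := mem_range.mp (hAm ha); have := mem_range.mp (hAm hb)
    exact hsA (mem_add.mpr ⟨a, ha, b, hb, by omega⟩)

lemma card_missingSumSets_reflect (hm : 5 ≤ m) (hs : s ≤ 2 * m - 2) :
    #(missingSumSets m (2 * m - 2 - s)) = #(missingSumSets m s) := by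
  have hinv :
      ∀ t, ∀ A ∈ missingSumSets m t, (A.image (m - 1 - ·)).image (m - 1 - ·) = A := by
    intro t A hA
    simp only [missingSumSets, mem_filter, mem_Icc] at hA
    rw [image_image]
    refine (image_congr fun x hx => ?_).trans image_id
    have := mem_range.mp (hA.1.2 hx); simp only [Function.comp_apply, id_eq]; omega
  have hback :
      ∀ A ∈ missingSumSets m (2 * m - 2 - s), A.image (m - 1 - ·) ∈ missingSumSets m s := by
    intro A hA
    have h := reflect_mem_missingSumSets hm (by omega) hA
    rwa [show 2 * m - 2 - (2 * m - 2 - s) = s by omega] at h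
  exact card_bij' (fun A _ => A.image (m - 1 - ·)) (fun A _ => A.image (m - 1 - ·))
    hback (fun A hA => reflect_mem_missingSumSets hm hs hA) (hinv _) (hinv _)

end MissingSums

lemma sumset_eq_Icc_of_mem_Icc_skeleton {m : ℕ} {A : Finset ℕ} (hm : 5 ≤ m)
    (hA : A ∈ Icc (skeleton m) (range m))
    (hmid : ∀ r < m - 14, 9 + r ∈ A + A ∧ 2 * m - 2 - (9 + r) ∈ A + A) :
    A + A = Icc 0 (2 * m - 2) := by
  rw [mem_Icc] at hA
  refine (add_subset_add hA.2 hA.2).trans (range_add_range (by omega)).subset |>.antisymm ?_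
  intro x hx
  rw [mem_Icc] at hx
  by_cases hsk : x ≤ 8 ∨ m - 5 ≤ x ∧ x ≤ m + 3 ∨ 2 * m - 10 ≤ x ∧ x ≤ 2 * m - 2
  · exact add_subset_add hA.1 hA.1 (mem_skeleton_add_skeleton (by omega) hsk)
  · by_cases hlow : x ≤ m - 6
    · simpa [show 9 + (x - 9) = x by omega] using (hmid (x - 9) (by omega)).1
    · simpa [show 2 * m - 2 - (9 + (2 * m - 11 - x)) = x by omega] using
        (hmid (2 * m - 11 - x) (by omega)).2

theorem card_biUnion_missingSumSets_le {m : ℕ} (hm : 10 ≤ m) :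
    (#((range (m - 14)).biUnion fun r =>
        missingSumSets m (9 + r) ∪ missingSumSets m (2 * m - 2 - (9 + r))) : ℚ) ≤
      3 / 4 * 2 ^ (m - 8) := by
  have hunion : #((range (m - 14)).biUnion fun r =>
        missingSumSets m (9 + r) ∪ missingSumSets m (2 * m - 2 - (9 + r))) ≤
      ∑ r ∈ range (m - 14), 2 * #(missingSumSets m (9 + r)) := by
    refine card_biUnion_le.trans (sum_le_sum fun r hr => (card_union_le _ _).trans ?_)
    have := mem_range.mp hr
    rw [card_missingSumSets_reflect (by omega) (by omega)]
    omega
  have hexp : ∀ r, (9 + r + 1) / 2 - 4 = r / 2 + 1 := fun r => by omega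
  calc _ ≤ ∑ r ∈ range (m - 14), 2 * (#(missingSumSets m (9 + r)) : ℚ) := by
        exact_mod_cast hunion
    _ ≤ ∑ r ∈ range (m - 14),
          2 * (2 ^ (m - 8) * ((3 / 4) ^ ((9 + r + 1) / 2 - 4) * (1 / 2) ^ 4)) :=
        sum_le_sum fun r hr => by
          have := mem_range.mp hr
          gcongr
          exact card_missingSumSets_le hm (by omega) (by omega)
    _ = 2 ^ (m - 8) * (3 / 32) * ∑ r ∈ range (m - 14), (3 / 4 : ℚ) ^ (r / 2) := by
        rw [mul_sum]
        refine sum_congr rfl fun r _ => ?_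
        rw [hexp, pow_succ]
        ring
    _ ≤ 2 ^ (m - 8) * (3 / 32) * (2 / (1 - 3 / 4)) := by
        gcongr
        exact sum_range_pow_div_two_le (by norm_num) (by norm_num) _
    _ = 3 / 4 * 2 ^ (m - 8) := by ring

theorem two_pow_sub_ten_le_card_sumset_eq_Icc_of_ten_le {m : ℕ} (hm : 10 ≤ m) :
    2 ^ (m - 10) ≤ #{A ∈ (range m).powerset | A + A = Icc 0 (2 * m - 2)} := by
  set full := {A ∈ (range m).powerset | A + A = Icc 0 (2 * m - 2)}
  set bad := (range (m - 14)).biUnion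
    fun r => missingSumSets m (9 + r) ∪ missingSumSets m (2 * m - 2 - (9 + r))
  have hcover : Icc (skeleton m) (range m) ⊆ full ∪ bad := by
    intro A hA
    by_contra hnot
    simp only [mem_union, not_or] at hnot
    refine hnot.1 (mem_filter.mpr ⟨mem_powerset.mpr (mem_Icc.mp hA).2,
      sumset_eq_Icc_of_mem_Icc_skeleton (by omega) hA fun r hr => ?_⟩)
    by_contra hmiss
    refine hnot.2 (mem_biUnion.mpr ⟨r, mem_range.mpr hr, ?_⟩)
    simp only [missingSumSets, mem_union, mem_filter]
    rcases not_and_or.mp hmiss with h | h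
    exacts [Or.inl ⟨hA, h⟩, Or.inr ⟨hA, h⟩]
  have hskel : #(Icc (skeleton m) (range m)) = 2 ^ (m - 8) := by
    rw [card_Icc_finset (skeleton_subset_range (by omega)), card_range, card_skeleton hm]
  have htotal : (2 ^ (m - 8) : ℚ) ≤ #full + #bad := by
    have h := (card_le_card hcover).trans (card_union_le full bad)
    rw [hskel] at h
    exact_mod_cast h
  have hpow : (2 : ℚ) ^ (m - 8) = 4 * 2 ^ (m - 10) := by
    rw [show m - 8 = m - 10 + 2 by omega, pow_add]; ring
  have hbad := card_biUnion_missingSumSets_le hm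
  exact_mod_cast (show (2 : ℚ) ^ (m - 10) ≤ #full by linarith)

theorem two_pow_sub_ten_le_card_sumset_eq_Icc {m : ℕ} (hm : 0 < m) :
    2 ^ (m - 10) ≤ #{A ∈ (range m).powerset | A + A = Icc 0 (2 * m - 2)} := by
  rcases le_or_gt 10 m with h10 | h10
  · exact two_pow_sub_ten_le_card_sumset_eq_Icc_of_ten_le h10
  · rw [Nat.sub_eq_zero_of_le h10.le, pow_zero, Nat.one_le_iff_ne_zero, Nat.ne_zero_iff_zero_lt,
      card_pos]
    exact ⟨range m, mem_filter.mpr ⟨mem_powerset_self _, range_add_range hm⟩⟩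

theorem card_sumset_eq_Icc_le_card_shift {m : ℕ} (c : ℕ) (hm : 0 < m) :
    #{A ∈ (range m).powerset | A + A = Icc 0 (2 * m - 2)} ≤
      #{A ∈ (range (m + c)).powerset | A + A = Icc (2 * c) (2 * (m + c) - 2)} := by
  refine card_le_card_of_injOn (·.image (· + c)) (fun A hA => ?_)
    ((image_injective (add_left_injective c)).injOn)
  simp only [mem_coe, mem_filter, mem_powerset] at hA ⊢
  refine ⟨fun x hx => ?_, ?_⟩
  · obtain ⟨a, ha, rfl⟩ := mem_image.mp hx
    have := mem_range.mp (hA.1 ha)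
    exact mem_range.mpr (by omega)
  · rw [image_add_right_add_image_add_right, hA.2, image_add_right_Icc]
    congr 1 <;> omega

theorem count_missing_exactly_k_general (k n : ℕ) (hk : Even k) (hn : k < n) :
    (2 ^ (n - k / 2 - 10) ≤
      ((Finset.range n).powerset.filter
        (fun A : Finset ℕ => A + A = Finset.Icc k (2 * n - 2))).card) ∧
    (((1 : ℚ) / 2) ^ (k / 2 + 10) ≤
      (((Finset.range n).powerset.filter
        (fun A : Finset ℕ => (Finset.Icc 0 (2 * n - 2) \ (A + A)).card = k)).card : ℚ) /
        2 ^ n) := by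
  obtain ⟨c, rfl⟩ := hk
  have hc : (c + c) / 2 = c := by omega
  have hfull :
      2 ^ (n - c - 10) ≤ #{A ∈ (range n).powerset | A + A = Icc (c + c) (2 * n - 2)} := by
    have h := (two_pow_sub_ten_le_card_sumset_eq_Icc (m := n - c) (by omega)).trans
      (card_sumset_eq_Icc_le_card_shift c (by omega))
    rwa [Nat.sub_add_cancel (by omega), two_mul] at h
  have hmissing : {A ∈ (range n).powerset | A + A = Icc (c + c) (2 * n - 2)} ⊆
      {A ∈ (range n).powerset | #(Icc 0 (2 * n - 2) \ (A + A)) = c + c} := by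
    refine monotone_filter_right _ fun A _ hA => ?_
    rw [hA, show Icc 0 (2 * n - 2) \ Icc (c + c) (2 * n - 2) = range (c + c) by
      ext x; simp only [mem_sdiff, mem_Icc, mem_range]; omega, card_range]
  rw [hc]
  refine ⟨hfull, ?_⟩
  rw [le_div_iff₀ (by positivity)]
  calc (1 / 2 : ℚ) ^ (c + 10) * 2 ^ n ≤ 2 ^ (n - c - 10) := by
        rw [div_pow, one_pow, one_div_mul_eq_div, div_le_iff₀ (by positivity), ← pow_add]
        exact pow_le_pow_right₀ one_le_two (by omega)
    _ ≤ _ := by exact_mod_cast hfull.trans (card_le_card hmissing)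

/-- For every even positive integer `k` and `n > k`, the number of subsets
`A ⊆ {0,...,n-1}` with `A + A = [k, 2n-2]` (the sumset misses exactly the first `k`
elements of `[0, 2n-2]`) is at least `2^(n - k/2 - 10)`. Consequently, for a uniformly
random `A ⊆ {0,...,n-1}` the probability that `|[0,2n-2] \ (A+A)| = k` is at least
`2^(-k/2 - 10)`. -/
theorem count_missing_exactly_k (k n : ℕ) (hk : Even k) (h0 : 0 < k) (hn : k < n) :
    (2 ^ (n - k / 2 - 10) ≤
      ((Finset.range n).powerset.filter
        (fun A : Finset ℕ => A + A = Finset.Icc k (2 * n - 2))).card) ∧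
    (((1 : ℚ) / 2) ^ (k / 2 + 10) ≤
      (((Finset.range n).powerset.filter
        (fun A : Finset ℕ => (Finset.Icc 0 (2 * n - 2) \ (A + A)).card = k)).card : ℚ) /
        2 ^ n) :=
  count_missing_exactly_k_general k n hk hn
end

section
/- Let D ⊆ ℕ be random with 0 ∈ D and each positive integer in D independently with probability 1/2, conditioned on D ∩ [0, n) = β where 0 ∈ β ⊆ [0, n). Then the conditional expectation of the number of integers t ≥ 2n missing from D + D equals 5 · 2^{−|β|}. -/
/-!
Write `D = {i | X i = true}` and `E = {D ∩ [0, n) = β}`, and fix `s = 2n + t`. On `E`, `s ∉ D + D`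
says exactly that `s - b ∉ D` for every `b ∈ β` and that no pair `{j, s - j}` with
`n ≤ j ≤ s / 2` lies in `D`. These two events and `E` are determined by the disjoint blocks of
coordinates `(s - n, s]`, `[n, s - n]` and `[0, n)`, hence independent: the first has probability
`2^{-|β|}`, the second is a product of a factor `3/4` for each pair `j < s - j` and `1/2` for
`j = s / 2`. Summing over even and odd `t` gives `2^{-|β|} (2 + 3)`.
-/

open MeasureTheory ProbabilityTheory
open scoped Pointwise ProbabilityTheory Classical

open scoped ENNReal

namespace ProbabilityTheory

section Blocks

variable {Ω ι α : Type*} [MeasurableSpace α] {X : ι → Ω → α}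

abbrev blockSigma (X : ι → Ω → α) (S : Set ι) : MeasurableSpace Ω :=
  ⨆ i ∈ S, MeasurableSpace.comap (X i) inferInstance

lemma blockSigma_mono {S T : Set ι} (h : S ⊆ T) : blockSigma X S ≤ blockSigma X T :=
  biSup_mono h

lemma measurableSet_blockSigma_preimage {S : Set ι} {i : ι} (hi : i ∈ S) {s : Set α}
    (hs : MeasurableSet s) : MeasurableSet[blockSigma X S] (X i ⁻¹' s) :=
  le_biSup (fun i => MeasurableSpace.comap (X i) inferInstance) hi _ ⟨s, hs, rfl⟩

variable [MeasurableSpace Ω] {μ : Measure Ω}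

lemma measure_inter_eq_mul_of_disjoint (hmeas : ∀ i, Measurable (X i)) (hindep : iIndepFun X μ)
    {S T : Set ι} (hST : Disjoint S T) {A B : Set Ω} (hA : MeasurableSet[blockSigma X S] A)
    (hB : MeasurableSet[blockSigma X T] B) : μ (A ∩ B) = μ A * μ B :=
  (Indep_iff _ _ _).1
    (indep_iSup_of_disjoint (fun i => (hmeas i).comap_le) hindep.iIndep hST) A B hA hB

lemma measure_biInter_eq_prod_of_pairwiseDisjoint [IsProbabilityMeasure μ]
    (hmeas : ∀ i, Measurable (X i)) (hindep : iIndepFun X μ) {κ : Type*} (K : Finset κ)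
    {S : κ → Set ι} (hS : (K : Set κ).PairwiseDisjoint S) {A : κ → Set Ω}
    (hA : ∀ k ∈ K, MeasurableSet[blockSigma X (S k)] (A k)) :
    μ (⋂ k ∈ K, A k) = ∏ k ∈ K, μ (A k) := by
  induction K using Finset.induction_on with
  | empty => simp
  | insert a K ha ih =>
    rw [Finset.coe_insert, Set.pairwiseDisjoint_insert] at hS
    have hdisj : Disjoint (S a) (⋃ k ∈ K, S k) :=
      Set.disjoint_iUnion₂_right.2 fun k hk => hS.2 k hk (ne_of_mem_of_not_mem hk ha).symm
    have hK : MeasurableSet[blockSigma X (⋃ k ∈ K, S k)] (⋂ k ∈ K, A k) :=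
      Finset.measurableSet_biInter _ fun k hk =>
        blockSigma_mono (Set.subset_biUnion_of_mem (u := S) hk) _
          (hA k (Finset.mem_insert_of_mem hk))
    rw [Finset.set_biInter_insert, Finset.prod_insert ha,
      measure_inter_eq_mul_of_disjoint hmeas hindep hdisj (hA a (Finset.mem_insert_self a K)) hK,
      ih hS.1 fun k hk => hA k (Finset.mem_insert_of_mem hk)]

end Blocks

section Bernoulli

variable {Ω ι : Type*} {X : ι → Ω → Bool}

lemma measurableSet_blockSigma_not_and {S : Set ι} {j k : ι} (hj : j ∈ S) (hk : k ∈ S) :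
    MeasurableSet[blockSigma X S] {ω | ¬(X j ω = true ∧ X k ω = true)} :=
  ((measurableSet_blockSigma_preimage hj (measurableSet_singleton true)).inter
    (measurableSet_blockSigma_preimage hk (measurableSet_singleton true))).compl

variable [MeasurableSpace Ω] {μ : Measure Ω} [IsProbabilityMeasure μ]

lemma measure_eq_half_of_bernoulli {i : ι} (hmeas : Measurable (X i))
    (hhalf : μ {ω | X i ω = true} = 1 / 2) (b : Bool) : μ {ω | X i ω = b} = 1 / 2 := by
  cases b
  · have htrue : MeasurableSet {ω | X i ω = true} := hmeas (measurableSet_singleton true)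
    simp_rw [Bool.eq_false_iff]
    rw [← Set.compl_ofPred, prob_compl_eq_one_sub htrue, hhalf, one_div, ENNReal.one_sub_inv_two]
  · exact hhalf

lemma measure_not_and_of_bernoulli (hmeas : ∀ i, Measurable (X i)) (hindep : iIndepFun X μ)
    {j k : ι} (hjk : j ≠ k) (hj : μ {ω | X j ω = true} = 1 / 2)
    (hk : μ {ω | X k ω = true} = 1 / 2) :
    μ {ω | ¬(X j ω = true ∧ X k ω = true)} = 3 / 4 := by
  have htrue (i : ι) : MeasurableSet {ω | X i ω = true} := hmeas i (measurableSet_singleton true)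
  have hboth : μ ({ω | X j ω = true} ∩ {ω | X k ω = true}) =
      μ {ω | X j ω = true} * μ {ω | X k ω = true} :=
    (hindep.indepFun hjk).measure_inter_preimage_eq_mul _ _
      (measurableSet_singleton true) (measurableSet_singleton true)
  change μ ({ω | X j ω = true} ∩ {ω | X k ω = true})ᶜ = 3 / 4
  rw [prob_compl_eq_one_sub ((htrue j).inter (htrue k)), hboth, hj, hk,
    ← ENNReal.toReal_eq_toReal_iff' (by finiteness) (by finiteness),
    ENNReal.toReal_sub_of_le (by norm_num) (by simp)]
  norm_num

end Bernoulli

end ProbabilityTheory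

lemma Nat.notMem_add_self_iff {D : Set ℕ} {n s : ℕ} (hs : 2 * n ≤ s) :
    s ∉ D + D ↔ (∀ b ∈ D, b < n → s - b ∉ D) ∧
      ∀ j ∈ Finset.Icc n (s / 2), ¬(j ∈ D ∧ s - j ∈ D) := by
  constructor
  · intro hs'
    refine ⟨fun b hb hbn hsb => hs' ⟨b, hb, s - b, hsb, by beta_reduce; omega⟩,
      fun j hj ⟨hjD, hsjD⟩ => hs' ⟨j, hjD, s - j, hsjD, ?_⟩⟩
    simp only [Finset.mem_Icc] at hj
    beta_reduce
    omega
  · rintro ⟨hsmall, hpair⟩ ⟨x, hx, y, hy, hxy : x + y = s⟩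
    wlog hle : x ≤ y generalizing x y
    · exact this y hy x hx (by omega) (by omega)
    obtain rfl : y = s - x := by omega
    by_cases hxn : x < n
    · exact hsmall x hx hxn hy
    · exact hpair x (by simp only [Finset.mem_Icc]; omega) ⟨hx, hy⟩

lemma tsum_prod_Icc_ite (n : ℕ) :
    ∑' t : ℕ, ∏ j ∈ Finset.Icc n ((2 * n + t) / 2),
      (if 2 * j < 2 * n + t then (3 / 4 : ℝ≥0∞) else 1 / 2) = 5 := by
  set f : ℕ → ℝ≥0∞ := fun t => ∏ j ∈ Finset.Icc n ((2 * n + t) / 2),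
    if 2 * j < 2 * n + t then 3 / 4 else 1 / 2
  have hf (t : ℕ) : f t = (3 / 4) ^ (t / 2) * if t % 2 = 1 then 3 / 4 else 1 / 2 := by
    simp only [f]
    rw [show (2 * n + t) / 2 = n + t / 2 by omega, ← Finset.Ico_add_one_right_eq_Icc,
      Finset.prod_Ico_eq_prod_range, show n + t / 2 + 1 - n = t / 2 + 1 by omega,
      Finset.prod_range_succ, Finset.prod_congr rfl fun i hi => if_pos (by simp at hi; omega),
      Finset.prod_const, Finset.card_range]
    congr 1
    exact if_congr (by omega) rfl rfl
  have hgeom : ∑' k : ℕ, (3 / 4 : ℝ≥0∞) ^ k = 4 := by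
    have : (1 : ℝ≥0∞) - 3 / 4 = 4⁻¹ := by
      rw [← ENNReal.toReal_eq_toReal_iff' (by finiteness) (by finiteness),
        ENNReal.toReal_sub_of_le (ENNReal.div_le_of_le_mul (by norm_num)) (by simp)]
      norm_num
    rw [ENNReal.tsum_geometric, this, inv_inv]
  have heven (k : ℕ) : f (2 * k) = (3 / 4) ^ k * (1 / 2) := by
    rw [hf, if_neg (by omega), show 2 * k / 2 = k by omega]
  have hodd (k : ℕ) : f (2 * k + 1) = (3 / 4) ^ k * (3 / 4) := by
    rw [hf, if_pos (by omega), show (2 * k + 1) / 2 = k by omega]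
  rw [← tsum_even_add_odd (f := f) ENNReal.summable ENNReal.summable, tsum_congr heven,
    tsum_congr hodd, ENNReal.tsum_mul_right, ENNReal.tsum_mul_right, hgeom,
    ← ENNReal.toReal_eq_toReal_iff' (by finiteness) (by finiteness),
    ENNReal.toReal_add (by finiteness) (by finiteness)]
  norm_num

lemma lintegral_ite_zero_one {Ω : Type*} [MeasurableSpace Ω] {μ : Measure Ω} {p : Ω → Prop}
    (hp : MeasurableSet {ω | p ω}) :
    ∫⁻ ω, (if p ω then 0 else 1) ∂μ = μ {ω | ¬p ω} := by
  rw [← lintegral_indicator_one (s := {ω | ¬p ω}) hp.compl]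
  congr with ω
  by_cases h : p ω <;> simp [h]

section RandomSumset

variable {Ω : Type*} {X : ℕ → Ω → Bool}

lemma setOf_forall_lt_iff_eq_biInter (n : ℕ) (β : Finset ℕ) :
    {ω | ∀ i < n, (X i ω = true ↔ i ∈ β)} = ⋂ i ∈ Finset.range n, X i ⁻¹' {decide (i ∈ β)} := by
  ext ω
  simp only [Set.mem_ofPred_eq, Set.mem_iInter, Finset.mem_range, Set.mem_preimage,
    Set.mem_singleton_iff]
  refine forall₂_congr fun i _ => ?_
  cases X i ω <;> simp

variable [MeasurableSpace Ω] {μ : Measure Ω} [IsProbabilityMeasure μ]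

lemma measurableSet_setOf_forall_lt_iff (hmeas : ∀ i, Measurable (X i)) (n : ℕ) (β : Finset ℕ) :
    MeasurableSet {ω | ∀ i < n, (X i ω = true ↔ i ∈ β)} := by
  rw [setOf_forall_lt_iff_eq_biInter]
  exact Finset.measurableSet_biInter _ fun i _ => hmeas i (measurableSet_singleton _)

lemma measurableSet_setOf_mem_add (hmeas : ∀ i, Measurable (X i)) (s : ℕ) :
    MeasurableSet {ω | s ∈ {i | X i ω = true} + {i | X i ω = true}} := by
  simp only [Set.mem_add, Set.mem_ofPred_eq]
  measurability

lemma measure_setOf_forall_lt_iff_ne_zero (hmeas : ∀ i, Measurable (X i))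
    (hindep : iIndepFun X μ) (hzero : ∀ ω, X 0 ω = true)
    (hhalf : ∀ i, 0 < i → μ {ω | X i ω = true} = 1 / 2) {n : ℕ} {β : Finset ℕ} (hβ0 : 0 ∈ β) :
    μ {ω | ∀ i < n, (X i ω = true ↔ i ∈ β)} ≠ 0 := by
  rw [setOf_forall_lt_iff_eq_biInter,
    hindep.meas_biInter fun i _ => ⟨{decide (i ∈ β)}, measurableSet_singleton _, rfl⟩,
    Finset.prod_ne_zero_iff]
  rintro (_ | i) -
  · simp [hβ0, show X 0 ⁻¹' {true} = Set.univ from Set.eq_univ_of_forall hzero]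
  · exact (measure_eq_half_of_bernoulli (hmeas _) (hhalf _ i.succ_pos) _).trans_ne (by simp)

lemma measure_not_and_sub_of_bernoulli (hmeas : ∀ i, Measurable (X i)) (hindep : iIndepFun X μ)
    (hhalf : ∀ i, 0 < i → μ {ω | X i ω = true} = 1 / 2) {j s : ℕ} (hj : 0 < j)
    (hjs : 2 * j ≤ s) :
    μ {ω | ¬(X j ω = true ∧ X (s - j) ω = true)} = if 2 * j < s then 3 / 4 else 1 / 2 := by
  split_ifs with hlt
  · exact measure_not_and_of_bernoulli hmeas hindep (by omega) (hhalf j hj) (hhalf _ (by omega))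
  · rw [show s - j = j by omega]
    simpa using measure_eq_half_of_bernoulli (hmeas j) (hhalf j hj) false

lemma measure_biInter_setOf_sub_eq_false (hmeas : ∀ i, Measurable (X i))
    (hindep : iIndepFun X μ) (hhalf : ∀ i, 0 < i → μ {ω | X i ω = true} = 1 / 2)
    {β : Finset ℕ} {s : ℕ} (hβs : ∀ b ∈ β, b < s) :
    μ (⋂ b ∈ β, {ω | X (s - b) ω = false}) = (1 / 2) ^ β.card := by
  rw [measure_biInter_eq_prod_of_pairwiseDisjoint hmeas hindep β (S := fun b => {s - b})
      (A := fun b => {ω | X (s - b) ω = false}) (fun a ha b hb hab => Set.disjoint_singleton.2 (by have := hβs a ha; have := hβs b hb; omega))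
      fun b _ => measurableSet_blockSigma_preimage (Set.mem_singleton _)
        (measurableSet_singleton false),
    Finset.prod_congr rfl fun b hb => measure_eq_half_of_bernoulli (hmeas _)
      (hhalf _ (by have := hβs b hb; omega)) false, Finset.prod_const]

lemma measure_biInter_Icc_not_and (hmeas : ∀ i, Measurable (X i)) (hindep : iIndepFun X μ)
    (hhalf : ∀ i, 0 < i → μ {ω | X i ω = true} = 1 / 2) {n : ℕ} (hn : 0 < n) (s : ℕ) :
    μ (⋂ j ∈ Finset.Icc n (s / 2), {ω | ¬(X j ω = true ∧ X (s - j) ω = true)}) =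
      ∏ j ∈ Finset.Icc n (s / 2), if 2 * j < s then 3 / 4 else 1 / 2 := by
  rw [measure_biInter_eq_prod_of_pairwiseDisjoint hmeas hindep _ (S := fun j => {j, s - j})
    (fun a ha b hb hab => by
      simp only [Finset.coe_Icc, Set.mem_Icc] at ha hb
      simp only [Set.disjoint_insert_left, Set.disjoint_insert_right, Set.disjoint_singleton,
        Set.mem_insert_iff, Set.mem_singleton_iff]
      omega)
    fun j _ => measurableSet_blockSigma_not_and (by simp) (by simp)]
  exact Finset.prod_congr rfl fun j hj => by
    simp only [Finset.mem_Icc] at hj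
    exact measure_not_and_sub_of_bernoulli hmeas hindep hhalf (by omega) (by omega)

lemma measure_inter_setOf_notMem_add (hmeas : ∀ i, Measurable (X i)) (hindep : iIndepFun X μ)
    (hhalf : ∀ i, 0 < i → μ {ω | X i ω = true} = 1 / 2) {n : ℕ} (hn : 0 < n) {β : Finset ℕ}
    (hβn : ∀ b ∈ β, b < n) {s : ℕ} (hs : 2 * n ≤ s) :
    μ ({ω | ∀ i < n, (X i ω = true ↔ i ∈ β)} ∩
        {ω | s ∉ {i | X i ω = true} + {i | X i ω = true}}) =
      μ {ω | ∀ i < n, (X i ω = true ↔ i ∈ β)} *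
        ((1 / 2) ^ β.card * ∏ j ∈ Finset.Icc n (s / 2), if 2 * j < s then 3 / 4 else 1 / 2) := by
  set E := {ω | ∀ i < n, (X i ω = true ↔ i ∈ β)} with hE
  set G := ⋂ b ∈ β, {ω | X (s - b) ω = false} with hG
  set P := ⋂ j ∈ Finset.Icc n (s / 2), {ω | ¬(X j ω = true ∧ X (s - j) ω = true)} with hP
  have hmissing :
      E ∩ {ω | s ∉ {i | X i ω = true} + {i | X i ω = true}} = E ∩ (G ∩ P) := by
    ext ω
    simp only [Set.mem_inter_iff, Set.mem_ofPred_eq, Nat.notMem_add_self_iff hs, G, P,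
      Set.mem_iInter, and_congr_right_iff]
    intro hω
    refine and_congr_left fun _ => ⟨fun h b hb => ?_, fun h b hbD hbn => ?_⟩
    · simpa using h b ((hω b (hβn b hb)).2 hb) (hβn b hb)
    · simpa using h b ((hω b hbn).1 hbD)
  have hEm : MeasurableSet[blockSigma X (Set.Iio n)] E := by
    rw [hE, setOf_forall_lt_iff_eq_biInter]
    exact Finset.measurableSet_biInter _ fun i hi =>
      measurableSet_blockSigma_preimage (by simpa using hi) (measurableSet_singleton _)
  have hGm (T : Set ℕ) (hT : ∀ b < n, s - b ∈ T) : MeasurableSet[blockSigma X T] G :=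
    Finset.measurableSet_biInter _ fun b hb =>
      measurableSet_blockSigma_preimage (hT b (hβn b hb)) (measurableSet_singleton false)
  have hPm (T : Set ℕ) (hT : ∀ j, n ≤ j → j ≤ s - n → j ∈ T) :
      MeasurableSet[blockSigma X T] P :=
    Finset.measurableSet_biInter _ fun j hj => by
      simp only [Finset.mem_Icc] at hj
      exact measurableSet_blockSigma_not_and (hT j (by omega) (by omega))
        (hT _ (by omega) (by omega))
  rw [hmissing, measure_inter_eq_mul_of_disjoint hmeas hindep (Set.Iio_disjoint_Ici le_rfl) hEm
      ((hGm _ fun b hb => by simp; omega).inter (hPm _ fun j hj _ => hj)),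
    measure_inter_eq_mul_of_disjoint hmeas hindep (Set.Iic_disjoint_Ioi le_rfl).symm
      (hGm _ fun b hb => by simp; omega) (hPm _ fun j _ hj => hj),
    hG, measure_biInter_setOf_sub_eq_false hmeas hindep hhalf fun b hb => by
      have := hβn b hb; omega,
    hP, measure_biInter_Icc_not_and hmeas hindep hhalf hn s]

end RandomSumset

theorem cond_expect_missing_tail_general {Ω : Type*} [MeasurableSpace Ω] (μ : Measure Ω)
    [IsProbabilityMeasure μ] (X : ℕ → Ω → Bool) (hmeas : ∀ i, Measurable (X i))
    (hindep : iIndepFun X μ)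
    (hzero : ∀ ω, X 0 ω = true)
    (hhalf : ∀ i, 0 < i → μ {ω | X i ω = true} = 1 / 2)
    (n : ℕ) (β : Finset ℕ) (hβ0 : 0 ∈ β) (hβn : ∀ b ∈ β, b < n) :
    ∫⁻ ω, (∑' t : ℕ,
        if 2 * n + t ∈ {i | X i ω = true} + {i | X i ω = true} then 0 else 1)
        ∂(μ[|{ω | ∀ i < n, (X i ω = true ↔ i ∈ β)}]) =
      5 * (1 / 2 : ENNReal) ^ β.card := by
  set E := {ω | ∀ i < n, (X i ω = true ↔ i ∈ β)}
  have hE : MeasurableSet E := measurableSet_setOf_forall_lt_iff hmeas n β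
  have hE0 : μ E ≠ 0 := measure_setOf_forall_lt_iff_ne_zero hmeas hindep hzero hhalf hβ0
  have hterm (t : ℕ) :
      ∫⁻ ω, (if 2 * n + t ∈ {i | X i ω = true} + {i | X i ω = true} then 0 else 1) ∂μ[|E] =
        (1 / 2) ^ β.card * ∏ j ∈ Finset.Icc n ((2 * n + t) / 2),
          if 2 * j < 2 * n + t then 3 / 4 else 1 / 2 := by
    rw [lintegral_ite_zero_one (measurableSet_setOf_mem_add hmeas _), cond_apply hE,
      measure_inter_setOf_notMem_add hmeas hindep hhalf (hβn 0 hβ0) hβn (by omega), ← mul_assoc,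
      ENNReal.inv_mul_cancel hE0 (measure_ne_top μ E), one_mul]
  rw [lintegral_tsum fun t => (Measurable.ite (measurableSet_setOf_mem_add hmeas _)
      measurable_const measurable_const).aemeasurable, tsum_congr hterm, ENNReal.tsum_mul_left,
    tsum_prod_Icc_ite, mul_comm]

/-- Let `D` be a random subset of `ℕ` containing `0`, with each positive integer in `D`
independently with probability `1/2` (encoded by independent indicator variables `X i`).
Conditioned on `D ∩ [0, n) = β` (with `0 ∈ β ⊆ [0, n)`), the expected number of
integers `t ≥ 2n` missing from `D + D` equals `5 · 2^(-|β|)`. -/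
theorem cond_expect_missing_tail {Ω : Type*} [MeasurableSpace Ω] (μ : Measure Ω)
    [IsProbabilityMeasure μ] (X : ℕ → Ω → Bool) (hmeas : ∀ i, Measurable (X i))
    (hindep : iIndepFun X μ)
    (hzero : ∀ ω, X 0 ω = true)
    (hhalf : ∀ i, 0 < i → μ {ω | X i ω = true} = 1 / 2)
    (n : ℕ) (hn : 1 ≤ n) (β : Finset ℕ) (hβ0 : 0 ∈ β) (hβn : ∀ b ∈ β, b < n) :
    ∫⁻ ω, (∑' t : ℕ,
        if 2 * n + t ∈ {i | X i ω = true} + {i | X i ω = true} then 0 else 1)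
        ∂(μ[|{ω | ∀ i < n, (X i ω = true ↔ i ∈ β)}]) =
      5 * (1 / 2 : ENNReal) ^ β.card :=
  cond_expect_missing_tail_general μ X hmeas hindep hzero hhalf n β hβ0 hβn
end
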